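/- arXiv:1010.4248 — 3 statements merged into one kernel-verified Lean document; each statement's English description precedes it below -/
import Mathlib

section
/- The function g:(0,∞)→[0,∞) is finite-valued, decreasing (nonincreasing) and convex. -/
open MeasureTheory Filter Set
open scoped ENNReal NNReal

noncomputable section

abbrev Rd (d : ℕ) := Fin d → ℝ

/-- `nrm` is a norm on `ℝ^d`. -/
def IsNorm {d : ℕ} (nrm : Rd d → ℝ) : Prop :=
  (∀ x, 0 ≤ nrm x) ∧ (∀ x, nrm x = 0 ↔ x = 0) ∧
  (∀ (c : ℝ) (x : Rd d), nrm (c • x) = |c| * nrm x) ∧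
  (∀ x y, nrm (x + y) ≤ nrm x + nrm y)

/-- The standing assumptions on `φ`: increasing, nonnegative, left continuous,
`lim_{t↓0} φ(t) = 0`, and not identically zero on `[0,∞)`. -/
def PhiOK (φ : ℝ → ℝ) : Prop :=
  MonotoneOn φ (Ici 0) ∧ (∀ t, 0 ≤ t → 0 ≤ φ t) ∧
  (∀ t, 0 < t → Tendsto φ (nhdsWithin t (Iio t)) (nhds (φ t))) ∧
  Tendsto φ (nhdsWithin 0 (Ioi 0)) (nhds 0) ∧
  (∃ t, 0 ≤ t ∧ φ t ≠ 0)

/-- distance from a point to a set, `d(x,A) = inf_{y ∈ A} ‖x - y‖`. -/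
def dSet {d : ℕ} (nrm : Rd d → ℝ) (x : Rd d) (A : Set (Rd d)) : ℝ :=
  sInf ((fun y => nrm (x - y)) '' A)

/-- the unit cube `[0,1)^d`. -/
def unitCube (d : ℕ) : Set (Rd d) := univ.pi fun _ => Ico (0:ℝ) 1

/-- `f_N(η) = inf_C E[φ((N/η)^{1/d} d(U,C))]`, infimum over nonempty codebooks of at most
`⌊N⌋` points, `U` uniform on `[0,1)^d`; it is `∞` for `N < 1` (empty infimum). -/
def fNq {d : ℕ} (nrm : Rd d → ℝ) (φ : ℝ → ℝ) (N η : ℝ) : ℝ≥0∞ :=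
  ⨅ (C : Finset (Rd d)) (_ : C.Nonempty) (_ : (C.card : ℝ) ≤ N),
    ∫⁻ x in unitCube d, ENNReal.ofReal (φ ((N / η) ^ (1 / (d:ℝ)) * dSet nrm x (C : Set (Rd d)))) ∂volume

/-- `g(η) = inf_{N ≥ 1} f_N(η)` for `η > 0`, extended by `g(0) = lim_{η↓0} g(η) = sup_{η>0} g(η)`
for `η ≤ 0`. -/
def gq {d : ℕ} (nrm : Rd d → ℝ) (φ : ℝ → ℝ) (η : ℝ) : ℝ≥0∞ :=
  if 0 < η then ⨅ N ∈ Ici (1:ℝ), fNq nrm φ N η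
  else ⨆ η' ∈ Ioi (0:ℝ), ⨅ N ∈ Ici (1:ℝ), fNq nrm φ N η'

/-- the absolutely continuous part `μ_c` of `μ` with respect to Lebesgue measure. -/
def muc {d : ℕ} (μ : Measure (Rd d)) : Measure (Rd d) :=
  volume.withDensity (μ.rnDeriv volume)

/-- Orlicz norm `‖F(X)‖_φ = inf{t > 0 : E[φ(F(X)/t)] ≤ 1}` (as the `sInf` in `ℝ≥0∞`,
so it is `∞` when no such `t` exists), where `X` has law `μ`. -/
def orliczN {d : ℕ} (φ : ℝ → ℝ) (μ : Measure (Rd d)) (F : Rd d → ℝ) : ℝ≥0∞ :=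
  sInf {s : ℝ≥0∞ | ∃ t : ℝ, 0 < t ∧ s = ENNReal.ofReal t ∧
    ∫⁻ x, ENNReal.ofReal (φ (F x / t)) ∂μ ≤ 1}

/-- the quantization error `δ(N|X,φ)`, where `X` has law `μ`. -/
def quantErr {d : ℕ} (nrm : Rd d → ℝ) (φ : ℝ → ℝ) (μ : Measure (Rd d)) (N : ℝ) : ℝ≥0∞ :=
  ⨅ (C : Finset (Rd d)) (_ : C.Nonempty) (_ : (C.card : ℝ) ≤ N),
    orliczN φ μ (fun x => dSet nrm x (C : Set (Rd d)))

/-- `I`, the value of the point allocation problem. -/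
def pav {d : ℕ} (nrm : Rd d → ℝ) (φ : ℝ → ℝ) (μ : Measure (Rd d)) : ℝ≥0∞ :=
  ⨅ (ξ : Rd d → ℝ) (_ : ∀ x, 0 ≤ ξ x) (_ : Integrable ξ volume)
    (_ : ∫⁻ x, gq nrm φ (ξ x) ∂(muc μ) ≤ 1),
    ENNReal.ofReal (∫ x, ξ x)

/-- `ḡ(a) = inf_{η>0} [g(η) + aη]`. -/
def gbarq {d : ℕ} (nrm : Rd d → ℝ) (φ : ℝ → ℝ) (a : ℝ≥0∞) : ℝ≥0∞ :=
  ⨅ η ∈ Ioi (0:ℝ), (gq nrm φ η + a * ENNReal.ofReal η)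

/-!
Write `cubeCost M C = ∫_{[0,1)^d} φ(M d(x,C)) dx`. Then `g(η)` is the infimum of `cubeCost M C`
over nonempty codebooks with `#C ≤ M^d η`, so `g` is finite (one point suffices) and
nonincreasing (a constraint that only gets weaker).

For convexity, cut the cube into `k^d` subcubes of side `1/k` and put a copy of a codebook `C_v`,
shrunk by `1/k`, into subcube `v`. Since `φ` is monotone and the distance to the union is at most
the distance to the copy in one's own subcube, the union at scale `kM` costs at most the average
of the costs of the `C_v` at scale `M`. With all `C_v` equal this refines the scale of a codebook
without changing its density `#C / M^d`; this brings near-optimal codebooks for `η₁` and `η₂` to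
a common scale, up to a density factor `ρ^d` close to `1`. Then using the first one in a fraction
`u/k` of the subcubes and the second in the rest gives `g(η) ≤ s g(η₁) + (1-s) g(η₂)` for
`s = u/k` and every `η > s η₁ + (1-s) η₂`. Real weights are reached by rational ones from the
side where `s η₁ + (1-s) η₂` is below the target.
-/

open Topology

theorem sum_ite_mem_univ {ι α : Type*} [Fintype ι] [DecidableEq ι] [AddCommMonoid α]
    (S : Finset ι) (a b : α) :
    ∑ i, (if i ∈ S then a else b) = S.card • a + (Fintype.card ι - S.card) • b := by
  rw [Finset.sum_ite, Finset.sum_const, Finset.sum_const, Finset.filter_mem_eq_inter,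
    Finset.univ_inter, Finset.filter_not, Finset.filter_mem_eq_inter, Finset.univ_inter,
    Finset.card_sdiff_of_subset S.subset_univ, Finset.card_univ]

theorem exists_nat_div_mem_Ioo {a b : ℝ} (ha : 0 ≤ a) (hab : a < b) :
    ∃ u k : ℕ, 0 < k ∧ a < u / k ∧ (u / k : ℝ) < b := by
  obtain ⟨n, hn⟩ := exists_nat_one_div_lt (sub_pos.2 hab)
  have hk : (0 : ℝ) < n + 1 := by positivity
  refine ⟨⌊a * (n + 1)⌋₊ + 1, n + 1, n.succ_pos, ?_, ?_⟩
  · push_cast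
    rw [lt_div_iff₀ hk]
    exact Nat.lt_floor_add_one _
  · push_cast
    calc ((⌊a * (n + 1)⌋₊ : ℝ) + 1) / (n + 1) ≤ (a * (n + 1) + 1) / (n + 1) := by
          gcongr
          exact Nat.floor_le (by positivity)
      _ = a + 1 / (n + 1) := by field_simp
      _ < b := by linarith

theorem le_convex_combo_of_nat_div {f : ℝ → ℝ≥0∞} {x₁ x₂ : ℝ} (hx : x₁ < x₂)
    (hf : f x₁ ≠ ⊤)
    (h : ∀ u k : ℕ, 0 < k → u ≤ k → ∀ y, u / k * x₁ + (1 - u / k) * x₂ < y →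
      f y ≤ ENNReal.ofReal (u / k) * f x₁ + ENNReal.ofReal (1 - u / k) * f x₂)
    {a b : ℝ} (ha : 0 ≤ a) (hb : 0 ≤ b) (hab : a + b = 1) :
    f (a * x₁ + b * x₂) ≤ ENNReal.ofReal a * f x₁ + ENNReal.ofReal b * f x₂ := by
  obtain rfl : b = 1 - a := by linarith
  rcases (show a ≤ 1 by linarith).eq_or_lt with rfl | ha1
  · simp
  refine ENNReal.le_of_forall_pos_le_add fun ε hε _ => ?_
  set c := (f x₁).toReal
  have hc : 0 < c + 1 := by positivity
  obtain ⟨u, k, hk, hau, hub⟩ :=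
    exists_nat_div_mem_Ioo ha (lt_min ha1 (lt_add_of_pos_right a (div_pos hε hc)))
  set q : ℝ := u / k
  have hu : u ≤ k := by
    have := (div_lt_one (Nat.cast_pos.2 hk)).1 (hub.trans_le (min_le_left _ _))
    exact_mod_cast this.le
  have hqc : (q - a) * c ≤ ε := by
    have := (lt_div_iff₀ hc).1 (sub_lt_iff_lt_add'.2 (hub.trans_le (min_le_right _ _)))
    calc (q - a) * c ≤ (q - a) * (c + 1) := by gcongr; linarith
      _ ≤ ε := this.le
  calc f (a * x₁ + (1 - a) * x₂)
      ≤ ENNReal.ofReal q * f x₁ + ENNReal.ofReal (1 - q) * f x₂ :=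
        h u k hk hu _ (by nlinarith [mul_pos (sub_pos.2 hau) (sub_pos.2 hx)])
    _ ≤ (ENNReal.ofReal a + ENNReal.ofReal (q - a)) * f x₁ +
          ENNReal.ofReal (1 - a) * f x₂ := by
        rw [← ENNReal.ofReal_add ha (sub_nonneg.2 hau.le), add_sub_cancel]
        gcongr
    _ = ENNReal.ofReal a * f x₁ + ENNReal.ofReal (1 - a) * f x₂ +
          ENNReal.ofReal (q - a) * f x₁ := by ring
    _ ≤ _ := by
        gcongr
        rw [← ENNReal.ofReal_toReal hf, ← ENNReal.ofReal_mul (sub_nonneg.2 hau.le)]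
        exact (ENNReal.ofReal_le_ofReal hqc).trans_eq ENNReal.ofReal_coe_nnreal

theorem exists_nat_mul_le_mul_le {a b ρ : ℝ} (ha : 0 < a) (hb : 0 < b) (hρ : 1 < ρ) :
    ∃ k₁ k₂ : ℕ, 0 < k₁ ∧ 0 < k₂ ∧ k₂ * b ≤ k₁ * a ∧ k₁ * a ≤ ρ * (k₂ * b) := by
  obtain ⟨k₂, hk₂⟩ := exists_nat_gt (a / ((ρ - 1) * b))
  have hρb : 0 < (ρ - 1) * b := mul_pos (sub_pos.2 hρ) hb
  have hk₂pos : (0 : ℝ) < k₂ := lt_trans (by positivity) hk₂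
  refine ⟨⌈k₂ * b / a⌉₊, k₂, Nat.ceil_pos.2 (by positivity), by exact_mod_cast hk₂pos,
    ?_, ?_⟩
  · rw [← div_le_iff₀ ha]
    exact Nat.le_ceil _
  · have h1 : (⌈k₂ * b / a⌉₊ : ℝ) < k₂ * b / a + 1 := Nat.ceil_lt_add_one (by positivity)
    have h2 : a < (ρ - 1) * (k₂ * b) := by
      rw [div_lt_iff₀ hρb] at hk₂
      linarith
    calc (⌈k₂ * b / a⌉₊ : ℝ) * a ≤ (k₂ * b / a + 1) * a := by gcongr
      _ = k₂ * b + a := by field_simp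
      _ ≤ ρ * (k₂ * b) := by linarith

theorem exists_one_lt_pow_mul_lt (d : ℕ) {w η : ℝ} (h : w < η) :
    ∃ ρ : ℝ, 1 < ρ ∧ ρ ^ d * w < η := by
  have hcont : Tendsto (fun ρ : ℝ => ρ ^ d * w) (𝓝[>] 1) (𝓝 w) := by
    have hc : Continuous fun ρ : ℝ => ρ ^ d * w := by fun_prop
    simpa using (hc.continuousWithinAt (s := Ioi 1) (x := 1)).tendsto
  obtain ⟨ρ, hlt, hρ⟩ :=
    ((hcont.eventually (gt_mem_nhds h)).and self_mem_nhdsWithin).exists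
  exact ⟨ρ, hρ, hlt⟩

section Quantization

variable {d : ℕ} {nrm : Rd d → ℝ} {φ : ℝ → ℝ}

namespace IsNorm

theorem nonneg (hnrm : IsNorm nrm) (x : Rd d) : 0 ≤ nrm x := hnrm.1 x

theorem smul (hnrm : IsNorm nrm) (c : ℝ) (x : Rd d) : nrm (c • x) = |c| * nrm x :=
  hnrm.2.2.1 c x

theorem add_le (hnrm : IsNorm nrm) (x y : Rd d) : nrm (x + y) ≤ nrm x + nrm y :=
  hnrm.2.2.2 x y

theorem map_zero (hnrm : IsNorm nrm) : nrm 0 = 0 := (hnrm.2.1 0).2 rfl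

theorem le_sum_abs_mul (hnrm : IsNorm nrm) (x : Rd d) :
    nrm x ≤ ∑ i, |x i| * nrm (Pi.single i 1) := by
  calc nrm x = nrm (∑ i, x i • Pi.single i (1 : ℝ)) := by
        congr 1; ext j; simp [Finset.sum_apply, Pi.single_apply]
    _ ≤ ∑ i, nrm (x i • Pi.single i (1 : ℝ)) :=
        Finset.le_sum_of_subadditive nrm hnrm.map_zero.le hnrm.add_le _ _
    _ = ∑ i, |x i| * nrm (Pi.single i 1) := by simp only [hnrm.smul]

theorem le_of_mem_unitCube (hnrm : IsNorm nrm) {x : Rd d} (hx : x ∈ unitCube d) :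
    nrm x ≤ ∑ i, nrm (Pi.single i (1 : ℝ)) := by
  refine (hnrm.le_sum_abs_mul x).trans (Finset.sum_le_sum fun i _ => ?_)
  have hxi : x i ∈ Ico (0 : ℝ) 1 := hx i (mem_univ i)
  rw [abs_of_nonneg hxi.1]
  exact mul_le_of_le_one_left (hnrm.nonneg _) hxi.2.le

end IsNorm

theorem dSet_nonneg (hnrm : IsNorm nrm) (x : Rd d) (A : Set (Rd d)) : 0 ≤ dSet nrm x A :=
  Real.sInf_nonneg (by rintro _ ⟨y, -, rfl⟩; exact hnrm.nonneg _)

theorem dSet_le (hnrm : IsNorm nrm) (x : Rd d) {A : Set (Rd d)} {y : Rd d} (hy : y ∈ A) :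
    dSet nrm x A ≤ nrm (x - y) :=
  csInf_le ⟨0, by rintro _ ⟨z, -, rfl⟩; exact hnrm.nonneg _⟩ ⟨y, hy, rfl⟩

theorem dSet_smul_add_le (hnrm : IsNorm nrm) {r : ℝ} (hr : 0 < r) {t : Rd d}
    {A C : Set (Rd d)} (hA : A.Nonempty) (hAC : ∀ z ∈ A, r • (z + t) ∈ C) (y : Rd d) :
    dSet nrm (r • (y + t)) C ≤ r * dSet nrm y A := by
  rw [← div_le_iff₀' hr]
  refine le_csInf (hA.image _) ?_
  rintro _ ⟨z, hz, rfl⟩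
  rw [div_le_iff₀' hr]
  calc dSet nrm (r • (y + t)) C ≤ nrm (r • (y + t) - r • (z + t)) :=
        dSet_le hnrm _ (hAC z hz)
    _ = r * nrm (y - z) := by
        rw [← smul_sub, add_sub_add_right_eq_sub, hnrm.smul, abs_of_pos hr]

theorem measurableSet_unitCube : MeasurableSet (unitCube d) :=
  MeasurableSet.univ_pi fun _ => measurableSet_Ico

theorem volume_unitCube : volume (unitCube d) = 1 := by
  simp [unitCube, Real.volume_pi_Ico]

theorem map_volume_smul_add {r : ℝ} (hr : r ≠ 0) (t : Rd d) :
    Measure.map (fun y : Rd d => r • (y + t)) volume =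
      ENNReal.ofReal |(r ^ d)⁻¹| • volume := by
  have hcomp : (fun y : Rd d => r • (y + t)) = (r • ·) ∘ (· + t) := rfl
  rw [hcomp, ← Measure.map_map (measurable_const_smul r) (measurable_add_const t),
    map_add_right_eq_self, Measure.map_addHaar_smul _ hr, Module.finrank_fin_fun]

theorem setLIntegral_image_smul_add {r : ℝ} (hr : 0 < r) (t : Rd d) (f : Rd d → ℝ≥0∞)
    (s : Set (Rd d)) :
    ∫⁻ x in (fun y => r • (y + t)) '' s, f x =
      ENNReal.ofReal (r ^ d) * ∫⁻ y in s, f (r • (y + t)) := by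
  let e : Rd d ≃ᵐ Rd d := (MeasurableEquiv.addRight t).trans (MeasurableEquiv.smul₀ r hr.ne')
  have he : MeasurePreserving e volume (ENNReal.ofReal |(r ^ d)⁻¹| • volume) :=
    ⟨e.measurable, map_volume_smul_add hr.ne' t⟩
  have h := he.setLIntegral_comp_emb e.measurableEmbedding f s
  rw [Measure.restrict_smul, lintegral_smul_measure, smul_eq_mul] at h
  change ∫⁻ x in e '' s, f x = _ * ∫⁻ y in s, f (e y)
  rw [h, ← mul_assoc, ← ENNReal.ofReal_mul (by positivity), abs_of_pos (by positivity),
    mul_inv_cancel₀ (by positivity), ENNReal.ofReal_one, one_mul]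

def cubeCost (nrm : Rd d → ℝ) (φ : ℝ → ℝ) (M : ℝ) (C : Finset (Rd d)) : ℝ≥0∞ :=
  ∫⁻ x in unitCube d, ENNReal.ofReal (φ (M * dSet nrm x C))

theorem cubeCost_mono (hnrm : IsNorm nrm) (hφ : MonotoneOn φ (Ici 0)) {M M' : ℝ} (hM : 0 ≤ M)
    (h : M ≤ M') (C : Finset (Rd d)) : cubeCost nrm φ M C ≤ cubeCost nrm φ M' C := by
  refine lintegral_mono fun x => ENNReal.ofReal_le_ofReal ?_
  have hx := dSet_nonneg hnrm x C
  exact hφ (mul_nonneg hM hx) (mul_nonneg (hM.trans h) hx) (by gcongr)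

theorem cubeCost_lt_top (hnrm : IsNorm nrm) (hφ : MonotoneOn φ (Ici 0)) {M : ℝ} (hM : 0 ≤ M)
    {C : Finset (Rd d)} (hC : C.Nonempty) : cubeCost nrm φ M C < ⊤ := by
  obtain ⟨c, hc⟩ := hC
  set R := ∑ i, nrm (Pi.single i (1 : ℝ)) + nrm (-c)
  have hbound : ∀ x ∈ unitCube d,
      ENNReal.ofReal (φ (M * dSet nrm x C)) ≤ ENNReal.ofReal (φ (M * R)) := by
    intro x hx
    have hxR : dSet nrm x C ≤ R :=
      calc dSet nrm x C ≤ nrm (x + -c) := by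
            rw [← sub_eq_add_neg]; exact dSet_le hnrm x (Finset.mem_coe.2 hc)
        _ ≤ R := (hnrm.add_le _ _).trans (by linarith [hnrm.le_of_mem_unitCube hx])
    have h0 := dSet_nonneg hnrm x C
    exact ENNReal.ofReal_le_ofReal
      (hφ (mul_nonneg hM h0) (mul_nonneg hM (h0.trans hxR)) (by gcongr))
  calc cubeCost nrm φ M C ≤ ∫⁻ _ in unitCube d, ENNReal.ofReal (φ (M * R)) :=
        setLIntegral_mono' measurableSet_unitCube hbound
    _ < ⊤ := by simp [volume_unitCube]

theorem gq_le_cubeCost_rpow {η N : ℝ} (hη : 0 < η) (hN : 1 ≤ N) {C : Finset (Rd d)}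
    (hC : C.Nonempty) (hcard : (C.card : ℝ) ≤ N) :
    gq nrm φ η ≤ cubeCost nrm φ ((N / η) ^ (1 / (d : ℝ))) C := by
  rw [gq, if_pos hη]
  exact iInf₂_le_of_le N hN (iInf₂_le_of_le C hC (iInf_le_of_le hcard le_rfl))

theorem gq_lt_top (hnrm : IsNorm nrm) (hφ : MonotoneOn φ (Ici 0)) {η : ℝ} (hη : 0 < η) :
    gq nrm φ η < ⊤ :=
  (gq_le_cubeCost_rpow hη le_rfl (Finset.singleton_nonempty 0) (by simp)).trans_lt
    (cubeCost_lt_top hnrm hφ (by positivity) (Finset.singleton_nonempty 0))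

theorem gq_le_cubeCost (hd : 0 < d) {η M : ℝ} (hη : 0 < η) (hM : 0 ≤ M) {C : Finset (Rd d)}
    (hC : C.Nonempty) (hcard : (C.card : ℝ) ≤ M ^ d * η) :
    gq nrm φ η ≤ cubeCost nrm φ M C := by
  have hN : 1 ≤ M ^ d * η := le_trans (by exact_mod_cast hC.card_pos) hcard
  convert gq_le_cubeCost_rpow hη hN hC hcard using 2
  rw [mul_div_cancel_right₀ _ hη.ne', one_div, Real.pow_rpow_inv_natCast hM hd.ne']

theorem exists_cubeCost_lt (hd : 0 < d) {η : ℝ} (hη : 0 < η) {c : ℝ≥0∞}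
    (h : gq nrm φ η < c) :
    ∃ M : ℝ, 0 < M ∧ ∃ C : Finset (Rd d), C.Nonempty ∧ (C.card : ℝ) ≤ M ^ d * η ∧
      cubeCost nrm φ M C < c := by
  rw [gq, if_pos hη] at h
  obtain ⟨N, h⟩ := iInf_lt_iff.1 h
  obtain ⟨hN : 1 ≤ N, h⟩ := iInf_lt_iff.1 h
  obtain ⟨C, h⟩ := iInf_lt_iff.1 h
  obtain ⟨hC, h⟩ := iInf_lt_iff.1 h
  obtain ⟨hcard, hlt⟩ := iInf_lt_iff.1 h
  have hNη : 0 ≤ N / η := div_nonneg (zero_le_one.trans hN) hη.le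
  refine ⟨(N / η) ^ (1 / (d : ℝ)), Real.rpow_pos_of_pos (div_pos (by linarith) hη) _,
    C, hC, ?_, hlt⟩
  rwa [one_div, Real.rpow_inv_natCast_pow hNη hd.ne', div_mul_cancel₀ _ hη.ne']

theorem gq_antitoneOn (hd : 0 < d) : AntitoneOn (gq nrm φ) (Ioi 0) := by
  intro η hη η' hη' hle
  refine le_of_forall_gt fun c hc => ?_
  obtain ⟨M, hM, C, hC, hcard, hlt⟩ := exists_cubeCost_lt hd hη hc
  exact (gq_le_cubeCost hd hη' hM.le hC (hcard.trans (by gcongr))).trans_lt hlt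

def cellCorner {k : ℕ} (v : Fin d → Fin k) : Rd d := fun i => (v i : ℝ)

def cellMap (k : ℕ) (v : Fin d → Fin k) (y : Rd d) : Rd d := (k : ℝ)⁻¹ • (y + cellCorner v)

theorem unitCube_subset_iUnion_cellMap {k : ℕ} (hk : 0 < k) :
    unitCube d ⊆ ⋃ v : Fin d → Fin k, cellMap k v '' unitCube d := by
  intro x hx
  have hkR : (0 : ℝ) < k := Nat.cast_pos.2 hk
  have hx' : ∀ i, 0 ≤ (k : ℝ) * x i ∧ (k : ℝ) * x i < k := fun i => by
    have := hx i (mem_univ i)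
    exact ⟨by nlinarith [this.1], by nlinarith [this.2]⟩
  let v : Fin d → Fin k := fun i => ⟨⌊(k : ℝ) * x i⌋₊, (Nat.floor_lt (hx' i).1).2 (hx' i).2⟩
  refine mem_iUnion.2 ⟨v, (k : ℝ) • x - cellCorner v, fun i _ => ?_, ?_⟩
  · simp only [Pi.sub_apply, Pi.smul_apply, smul_eq_mul, cellCorner, v]
    exact ⟨sub_nonneg.2 (Nat.floor_le (hx' i).1),
      sub_lt_iff_lt_add'.2 (Nat.lt_floor_add_one _)⟩
  · simp [cellMap, smul_smul, inv_mul_cancel₀ hkR.ne']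

def subdivide (k : ℕ) (D : (Fin d → Fin k) → Finset (Rd d)) : Finset (Rd d) :=
  Finset.univ.biUnion fun v => (D v).image (cellMap k v)

theorem subdivide_nonempty {k : ℕ} (hk : 0 < k) {D : (Fin d → Fin k) → Finset (Rd d)}
    (hD : ∀ v, (D v).Nonempty) : (subdivide k D).Nonempty :=
  Finset.biUnion_nonempty.2 ⟨fun _ => ⟨0, hk⟩, Finset.mem_univ _, (hD _).image _⟩

theorem card_subdivide_le (k : ℕ) (D : (Fin d → Fin k) → Finset (Rd d)) :
    (subdivide k D).card ≤ ∑ v, (D v).card :=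
  Finset.card_biUnion_le.trans (Finset.sum_le_sum fun _ _ => Finset.card_image_le)

theorem dSet_cellMap_le (hnrm : IsNorm nrm) {k : ℕ} (hk : 0 < k)
    {D : (Fin d → Fin k) → Finset (Rd d)} (hD : ∀ v, (D v).Nonempty) (v : Fin d → Fin k)
    (y : Rd d) :
    dSet nrm (cellMap k v y) (subdivide k D) ≤ (k : ℝ)⁻¹ * dSet nrm y (D v) :=
  dSet_smul_add_le hnrm (by positivity) (by exact_mod_cast hD v)
    (fun z hz => Finset.mem_coe.2 (Finset.mem_biUnion.2
      ⟨v, Finset.mem_univ _, Finset.mem_image_of_mem _ (Finset.mem_coe.1 hz)⟩)) y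

theorem cubeCost_subdivide_le (hnrm : IsNorm nrm) (hφ : MonotoneOn φ (Ici 0)) {M : ℝ}
    (hM : 0 ≤ M) {k : ℕ} (hk : 0 < k) {D : (Fin d → Fin k) → Finset (Rd d)}
    (hD : ∀ v, (D v).Nonempty) :
    cubeCost nrm φ (k * M) (subdivide k D) ≤
      ∑ v, ENNReal.ofReal ((k : ℝ)⁻¹ ^ d) * cubeCost nrm φ M (D v) := by
  have hkR : (0 : ℝ) < k := Nat.cast_pos.2 hk
  set F : Rd d → ℝ≥0∞ := fun x => ENNReal.ofReal (φ (k * M * dSet nrm x (subdivide k D)))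
  have hcell : ∀ v y, F (cellMap k v y) ≤ ENNReal.ofReal (φ (M * dSet nrm y (D v))) := by
    intro v y
    have h0 := dSet_nonneg hnrm (cellMap k v y) (subdivide k D)
    have h1 : k * M * dSet nrm (cellMap k v y) (subdivide k D) ≤ M * dSet nrm y (D v) :=
      calc k * M * dSet nrm (cellMap k v y) (subdivide k D)
          ≤ k * M * ((k : ℝ)⁻¹ * dSet nrm y (D v)) := by
            gcongr; exact dSet_cellMap_le hnrm hk hD v y
        _ = M * dSet nrm y (D v) := by field_simp
    exact ENNReal.ofReal_le_ofReal (hφ (mul_nonneg (by positivity) h0)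
      (mul_nonneg hM (dSet_nonneg hnrm y _)) h1)
  calc cubeCost nrm φ (k * M) (subdivide k D)
      ≤ ∫⁻ x in ⋃ v : Fin d → Fin k, cellMap k v '' unitCube d, F x :=
        lintegral_mono_set (unitCube_subset_iUnion_cellMap hk)
    _ ≤ ∑ v, ∫⁻ x in cellMap k v '' unitCube d, F x :=
        (lintegral_iUnion_le _ _).trans_eq (tsum_fintype _)
    _ ≤ _ := by
        refine Finset.sum_le_sum fun v _ => ?_
        rw [show cellMap k v = fun y => (k : ℝ)⁻¹ • (y + cellCorner v) from rfl,
          setLIntegral_image_smul_add (inv_pos.2 hkR)]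
        exact mul_le_mul_right (lintegral_mono fun y => hcell v y) _

theorem cast_mul_pow_pred (hd : 0 < d) {k : ℕ} (hk : 0 < k) (u : ℕ) :
    ((u * k ^ (d - 1) : ℕ) : ℝ) = k ^ d * (u / k) := by
  have hkd : (k : ℝ) ^ d = k ^ (d - 1) * k := by rw [← pow_succ, Nat.sub_add_cancel hd]
  push_cast
  rw [hkd]
  field_simp

theorem exists_mixed_codebook (hd : 0 < d) (hnrm : IsNorm nrm) (hφ : MonotoneOn φ (Ici 0))
    {M : ℝ} (hM : 0 ≤ M) {k u : ℕ} (hk : 0 < k) (hu : u ≤ k) {C₁ C₂ : Finset (Rd d)}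
    (hC₁ : C₁.Nonempty) (hC₂ : C₂.Nonempty) :
    ∃ C : Finset (Rd d), C.Nonempty ∧
      (C.card : ℝ) ≤ k ^ d * (u / k * C₁.card + (1 - u / k) * C₂.card) ∧
      cubeCost nrm φ (k * M) C ≤
        ENNReal.ofReal (u / k) * cubeCost nrm φ M C₁ +
          ENNReal.ofReal (1 - u / k) * cubeCost nrm φ M C₂ := by
  have hS : u * k ^ (d - 1) ≤ Fintype.card (Fin d → Fin k) := by
    rw [Fintype.card_fun, Fintype.card_fin, Fintype.card_fin,
      ← Nat.succ_pred_eq_of_pos hd, pow_succ', Nat.pred_eq_sub_one]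
    exact Nat.mul_le_mul_right _ hu
  obtain ⟨S, -, hScard⟩ := Finset.exists_subset_card_eq (s := Finset.univ) hS
  have hN₁ := cast_mul_pow_pred hd hk u
  have hN₂ : ((Fintype.card (Fin d → Fin k) - u * k ^ (d - 1) : ℕ) : ℝ) =
      k ^ d * (1 - u / k) := by
    rw [Nat.cast_sub hS, hN₁, Fintype.card_fun, Fintype.card_fin, Fintype.card_fin,
      Nat.cast_pow]
    ring
  set D : (Fin d → Fin k) → Finset (Rd d) := fun v => if v ∈ S then C₁ else C₂
  have hD : ∀ v, (D v).Nonempty := fun v => by by_cases hv : v ∈ S <;> simp [D, hv, hC₁, hC₂]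
  refine ⟨subdivide k D, subdivide_nonempty hk hD, ?_, ?_⟩
  · calc ((subdivide k D).card : ℝ) ≤ ((∑ v, (D v).card : ℕ) : ℝ) := by
          exact_mod_cast card_subdivide_le k D
      _ = _ := by
          simp only [D, apply_ite Finset.card, sum_ite_mem_univ, hScard, smul_eq_mul,
            Nat.cast_add, Nat.cast_mul, hN₁, hN₂]
          ring
  · have hofReal : ∀ (n : ℕ) (x : ℝ),
        (n : ℝ≥0∞) * ENNReal.ofReal x = ENNReal.ofReal (n * x) := fun n x => by
      rw [← ENNReal.ofReal_natCast, ← ENNReal.ofReal_mul (Nat.cast_nonneg _)]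
    refine (cubeCost_subdivide_le hnrm hφ hM hk hD).trans_eq ?_
    simp only [D, apply_ite (cubeCost nrm φ M), mul_ite, sum_ite_mem_univ, hScard, nsmul_eq_mul,
      ← mul_assoc, hofReal, hN₁, hN₂]
    congr 3 <;> rw [inv_pow] <;> field_simp

theorem exists_rescaled_codebook (hd : 0 < d) (hnrm : IsNorm nrm) (hφ : MonotoneOn φ (Ici 0))
    {η M₀ M ρ : ℝ} (hη : 0 ≤ η) (hM₀ : 0 ≤ M₀) (hM : 0 ≤ M) {k : ℕ} (hk : 0 < k)
    (hle : M ≤ k * M₀) (hleρ : k * M₀ ≤ ρ * M) {C₀ : Finset (Rd d)} (hC₀ : C₀.Nonempty)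
    (hcard : (C₀.card : ℝ) ≤ M₀ ^ d * η) :
    ∃ C : Finset (Rd d), C.Nonempty ∧ (C.card : ℝ) ≤ (ρ * M) ^ d * η ∧
      cubeCost nrm φ M C ≤ cubeCost nrm φ M₀ C₀ := by
  obtain ⟨C, hC, hcardC, hcost⟩ := exists_mixed_codebook hd hnrm hφ hM₀ hk le_rfl hC₀ hC₀
  have hk' : (k : ℝ) / k = 1 := div_self (Nat.cast_pos.2 hk).ne'
  rw [hk', sub_self, ENNReal.ofReal_one, ENNReal.ofReal_zero, one_mul, zero_mul, add_zero]
    at hcost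
  refine ⟨C, hC, ?_, (cubeCost_mono hnrm hφ hM hle C).trans hcost⟩
  calc (C.card : ℝ) ≤ k ^ d * C₀.card := by simpa [hk'] using hcardC
    _ ≤ k ^ d * (M₀ ^ d * η) := by gcongr
    _ = (k * M₀) ^ d * η := by ring
    _ ≤ (ρ * M) ^ d * η := by gcongr

theorem gq_le_combo_cubeCost (hd : 0 < d) (hnrm : IsNorm nrm) (hφ : MonotoneOn φ (Ici 0))
    {η₁ η₂ η : ℝ} (hη₁ : 0 < η₁) (hη₂ : 0 < η₂) {u k : ℕ} (hk : 0 < k) (hu : u ≤ k)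
    (hη : u / k * η₁ + (1 - u / k) * η₂ < η) {M₁ M₂ : ℝ} (hM₁ : 0 < M₁) (hM₂ : 0 < M₂)
    {C₁ C₂ : Finset (Rd d)} (hC₁ : C₁.Nonempty) (hC₂ : C₂.Nonempty)
    (hcard₁ : (C₁.card : ℝ) ≤ M₁ ^ d * η₁) (hcard₂ : (C₂.card : ℝ) ≤ M₂ ^ d * η₂) :
    gq nrm φ η ≤ ENNReal.ofReal (u / k) * cubeCost nrm φ M₁ C₁ +
      ENNReal.ofReal (1 - u / k) * cubeCost nrm φ M₂ C₂ := by
  set s : ℝ := u / k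
  have hs0 : 0 ≤ s := by positivity
  have hs1 : s ≤ 1 := div_le_one_of_le₀ (by exact_mod_cast hu) (Nat.cast_nonneg k)
  have hη0 : 0 < η := lt_of_le_of_lt (by nlinarith) hη
  obtain ⟨ρ, hρ, hρη⟩ := exists_one_lt_pow_mul_lt d hη
  obtain ⟨k₁, k₂, hk₁, hk₂, hle, hleρ⟩ := exists_nat_mul_le_mul_le hM₁ hM₂ hρ
  set M : ℝ := k₂ * M₂
  have hM : 0 ≤ M := by positivity
  obtain ⟨C₁', hC₁', hcard₁', hcost₁⟩ :=
    exists_rescaled_codebook hd hnrm hφ hη₁.le hM₁.le hM hk₁ hle hleρ hC₁ hcard₁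
  obtain ⟨C₂', hC₂', hcard₂', hcost₂⟩ := exists_rescaled_codebook hd hnrm hφ hη₂.le hM₂.le hM
    hk₂ le_rfl (le_mul_of_one_le_left hM hρ.le) hC₂ hcard₂
  obtain ⟨C, hC, hcard, hcost⟩ := exists_mixed_codebook hd hnrm hφ hM hk hu hC₁' hC₂'
  have hcardC : (C.card : ℝ) ≤ (k * M) ^ d * η :=
    calc (C.card : ℝ)
        ≤ k ^ d * (s * ((ρ * M) ^ d * η₁) + (1 - s) * ((ρ * M) ^ d * η₂)) := by
          refine hcard.trans ?_
          gcongr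
      _ = (k * M) ^ d * (ρ ^ d * (s * η₁ + (1 - s) * η₂)) := by ring
      _ ≤ (k * M) ^ d * η := by gcongr
  calc gq nrm φ η ≤ cubeCost nrm φ (k * M) C :=
        gq_le_cubeCost hd hη0 (by positivity) hC hcardC
    _ ≤ _ := hcost.trans (by gcongr)

theorem gq_le_nat_div_combo (hd : 0 < d) (hnrm : IsNorm nrm) (hφ : MonotoneOn φ (Ici 0))
    {η₁ η₂ : ℝ} (hη₁ : 0 < η₁) (hη₂ : 0 < η₂) {u k : ℕ} (hk : 0 < k) (hu : u ≤ k) {η : ℝ}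
    (hη : u / k * η₁ + (1 - u / k) * η₂ < η) :
    gq nrm φ η ≤
      ENNReal.ofReal (u / k) * gq nrm φ η₁ + ENNReal.ofReal (1 - u / k) * gq nrm φ η₂ := by
  refine ENNReal.le_of_forall_pos_le_add fun ε hε _ => ?_
  have hε' : (0 : ℝ≥0∞) < ε := by exact_mod_cast hε
  obtain ⟨M₁, hM₁, C₁, hC₁, hcard₁, hlt₁⟩ :=
    exists_cubeCost_lt hd hη₁ (ENNReal.lt_add_right (gq_lt_top hnrm hφ hη₁).ne hε'.ne')
  obtain ⟨M₂, hM₂, C₂, hC₂, hcard₂, hlt₂⟩ :=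
    exists_cubeCost_lt hd hη₂ (ENNReal.lt_add_right (gq_lt_top hnrm hφ hη₂).ne hε'.ne')
  have hsum : ENNReal.ofReal (u / k) + ENNReal.ofReal (1 - u / k) = 1 := by
    rw [← ENNReal.ofReal_add (by positivity)
      (sub_nonneg.2 (div_le_one_of_le₀ (by exact_mod_cast hu) (Nat.cast_nonneg k))),
      add_sub_cancel, ENNReal.ofReal_one]
  calc gq nrm φ η
      ≤ ENNReal.ofReal (u / k) * cubeCost nrm φ M₁ C₁ +
          ENNReal.ofReal (1 - u / k) * cubeCost nrm φ M₂ C₂ :=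
        gq_le_combo_cubeCost hd hnrm hφ hη₁ hη₂ hk hu hη hM₁ hM₂ hC₁ hC₂ hcard₁ hcard₂
    _ ≤ ENNReal.ofReal (u / k) * (gq nrm φ η₁ + ε) +
          ENNReal.ofReal (1 - u / k) * (gq nrm φ η₂ + ε) := by gcongr
    _ = ENNReal.ofReal (u / k) * gq nrm φ η₁ + ENNReal.ofReal (1 - u / k) * gq nrm φ η₂ +
          (ENNReal.ofReal (u / k) + ENNReal.ofReal (1 - u / k)) * ε := by ring
    _ = _ := by rw [hsum, one_mul]

end Quantization

/-- `g` is finite-valued, nonincreasing and convex on `(0,∞)`. -/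
theorem statement4 {d : ℕ} (hd : 0 < d)
    (nrm : Rd d → ℝ) (hnrm : IsNorm nrm) (φ : ℝ → ℝ) (hφ : PhiOK φ) :
    (∀ η : ℝ, 0 < η → gq nrm φ η ≠ ⊤) ∧
    AntitoneOn (gq nrm φ) (Ioi 0) ∧
    (∀ η₁ ∈ Ioi (0:ℝ), ∀ η₂ ∈ Ioi (0:ℝ), ∀ a b : ℝ, 0 ≤ a → 0 ≤ b → a + b = 1 →
      gq nrm φ (a * η₁ + b * η₂) ≤
        ENNReal.ofReal a * gq nrm φ η₁ + ENNReal.ofReal b * gq nrm φ η₂) := by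
  have hmono := hφ.1
  refine ⟨fun η hη => (gq_lt_top hnrm hmono hη).ne, gq_antitoneOn hd, ?_⟩
  intro η₁ hη₁ η₂ hη₂ a b ha hb hab
  rcases lt_trichotomy η₁ η₂ with hlt | rfl | hgt
  · exact le_convex_combo_of_nat_div hlt (gq_lt_top hnrm hmono hη₁).ne
      (fun u k hk hu _ hy => gq_le_nat_div_combo hd hnrm hmono hη₁ hη₂ hk hu hy) ha hb hab
  · rw [← add_mul, hab, one_mul, ← add_mul, ← ENNReal.ofReal_add ha hb, hab,
      ENNReal.ofReal_one, one_mul]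
  · rw [add_comm (a * η₁), add_comm (ENNReal.ofReal a * _)]
    exact le_convex_combo_of_nat_div hgt (gq_lt_top hnrm hmono hη₂).ne
      (fun u k hk hu _ hy => gq_le_nat_div_combo hd hnrm hmono hη₂ hη₁ hk hu hy) hb ha
      (by rw [add_comm, hab])

end
end

section
/- Let d = 1 and let ‖·‖ be the absolute value on ℝ. Then for every η > 0, g(η) = 2 ∫_0^{1/2} φ(t/η) dt. -/
open MeasureTheory Filter Set
open scoped ENNReal NNReal

noncomputable section

/-! The midpoint codebook with `N = 1` attains the value. Conversely, for a codebook `C` of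
`n ≤ N` points, `{x | d(x, C) ≤ s}` is covered by `n` intervals of length `2s`, so `d(U, C)`
stochastically dominates `U / (2n)`; by the layer-cake formula
`E φ((N/η) d(U, C)) ≥ E φ(N U / (2nη)) ≥ E φ(U / (2η))`, which is the same value. -/

open Metric

instance : IsProbabilityMeasure (volume.restrict (Ico (0:ℝ) 1)) := ⟨by simp⟩

section LayerCake

variable {α β : Type*} [MeasurableSpace α] [MeasurableSpace β]

theorem lintegral_ofReal_le_of_meas_lt_le {μ : Measure α} {ν : Measure β} {f : α → ℝ}
    {g : β → ℝ}
    (hf : 0 ≤ᵐ[μ] f) (hfm : AEMeasurable f μ) (hg : 0 ≤ᵐ[ν] g) (hgm : AEMeasurable g ν)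
    (h : ∀ t, ν {x | t < g x} ≤ μ {x | t < f x}) :
    ∫⁻ x, ENNReal.ofReal (g x) ∂ν ≤ ∫⁻ x, ENNReal.ofReal (f x) ∂μ := by
  rw [lintegral_eq_lintegral_meas_lt ν hg hgm, lintegral_eq_lintegral_meas_lt μ hf hfm]
  exact lintegral_mono fun t => h t

theorem lintegral_Ico_comp_div_le_lintegral_comp {μ : Measure α} [IsProbabilityMeasure μ]
    {D : α → ℝ} (hD : Measurable D) {k : ℝ} (hk : 0 < k)
    (hDk : ∀ s, 0 ≤ s → μ {x | D x ≤ s} ≤ ENNReal.ofReal (k * s))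
    {ψ : ℝ → ℝ} (hψ : Monotone ψ) (hψ0 : ∀ u, 0 ≤ ψ u) :
    ∫⁻ x in Ico 0 1, ENNReal.ofReal (ψ (x / k)) ≤ ∫⁻ x, ENNReal.ofReal (ψ (D x)) ∂μ := by
  set ν := volume.restrict (Ico (0:ℝ) 1)
  refine lintegral_ofReal_le_of_meas_lt_le (ae_of_all _ fun _ => hψ0 _)
    (hψ.measurable.comp hD).aemeasurable (ae_of_all _ fun _ => hψ0 _)
    (hψ.measurable.comp (measurable_id.div_const k)).aemeasurable fun t => ?_
  set S := {x : ℝ | ψ (x / k) ≤ t}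
  have hS : MeasurableSet S :=
    measurableSet_le (hψ.measurable.comp (measurable_id.div_const k)) measurable_const
  set b := (ν S).toReal
  have hνS : ν S = ENNReal.ofReal b := (ENNReal.ofReal_toReal (measure_ne_top ν S)).symm
  have hb : 0 ≤ b := ENNReal.toReal_nonneg
  have hsub : μ {x | ψ (D x) ≤ t} ≤ ν S := by
    rcases le_or_gt 1 b with hb1 | hb1
    · exact prob_le_one.trans (hνS ▸ ENNReal.one_le_ofReal.2 hb1)
    -- `S ∩ [0, 1)` is an initial segment of `[0, 1)` of length `b`, so `ψ (D x) ≤ t` forces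
    -- `k * D x ≤ b`.
    suffices h : {x | ψ (D x) ≤ t} ⊆ {x | D x ≤ b / k} by
      calc μ {x | ψ (D x) ≤ t} ≤ μ {x | D x ≤ b / k} := measure_mono h
        _ ≤ ENNReal.ofReal (k * (b / k)) := hDk _ (div_nonneg hb hk.le)
        _ = ν S := by rw [mul_div_cancel₀ _ hk.ne', hνS]
    intro x hx
    simp only [mem_ofPred_eq] at hx ⊢
    by_contra! hlt
    rw [div_lt_iff₀' hk] at hlt
    set m := min 1 (k * D x)
    have hIco : Ico 0 m ⊆ S := fun y hy =>
      (hψ ((div_lt_iff₀ hk).2 (by linarith [hy.2.trans_le (min_le_right _ _)])).le).trans hx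
    have hm : ENNReal.ofReal m ≤ ENNReal.ofReal b :=
      calc ENNReal.ofReal m = ν (Ico 0 m) := by
            rw [Measure.restrict_apply measurableSet_Ico,
              inter_eq_left.2 (Ico_subset_Ico_right (min_le_left _ _)), Real.volume_Ico, sub_zero]
        _ ≤ ν S := measure_mono hIco
        _ = ENNReal.ofReal b := hνS
    have hbm : b < m := lt_min hb1 hlt
    exact hbm.not_ge ((ENNReal.ofReal_le_ofReal_iff hb).1 hm)
  simp only [← not_le, ← compl_ofPred]
  rw [prob_compl_eq_one_sub hS,
    prob_compl_eq_one_sub (measurableSet_le (hψ.measurable.comp hD) measurable_const :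
      MeasurableSet {x | ψ (D x) ≤ t})]
  exact tsub_le_tsub_left hsub 1

end LayerCake

theorem volume_setOf_infDist_le (C : Finset ℝ) (hC : C.Nonempty) (s : ℝ) :
    volume {x | infDist x (C : Set ℝ) ≤ s} ≤ ENNReal.ofReal (2 * C.card * s) := by
  have hcover : {x | infDist x (C : Set ℝ) ≤ s} ⊆ ⋃ c ∈ C, closedBall c s := fun x hx => by
    obtain ⟨c, hc, hxc⟩ := C.finite_toSet.isCompact.exists_infDist_eq_dist hC.to_set x
    exact mem_biUnion hc (by rw [mem_closedBall, ← hxc]; exact hx)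
  calc volume {x | infDist x (C : Set ℝ) ≤ s}
      ≤ ∑ c ∈ C, volume (closedBall c s) :=
        (measure_mono hcover).trans (measure_biUnion_finset_le _ _)
    _ = ENNReal.ofReal (2 * C.card * s) := by
      simp only [Real.volume_closedBall, Finset.sum_const, nsmul_eq_mul]
      rw [← ENNReal.ofReal_natCast, ← ENNReal.ofReal_mul (Nat.cast_nonneg _), mul_left_comm,
        mul_assoc]

theorem lintegral_Ico_ofReal_eq {f : ℝ → ℝ} {a b : ℝ} (hab : a ≤ b)
    (hf : IntervalIntegrable f volume a b) (hf0 : ∀ x ∈ Ioc a b, 0 ≤ f x) :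
    ∫⁻ x in Ico a b, ENNReal.ofReal (f x) = ENNReal.ofReal (∫ x in a..b, f x) := by
  rw [setLIntegral_congr Ico_ae_eq_Ioc, intervalIntegral.integral_of_le hab,
    ofReal_integral_eq_lintegral_ofReal ((intervalIntegrable_iff_integrableOn_Ioc_of_le hab).1 hf)
      (ae_restrict_of_forall_mem measurableSet_Ioc hf0)]

section Symmetric

variable {f : ℝ → ℝ} {r : ℝ}

theorem eqOn_comp_abs_sub_left (c : ℝ) (hr : 0 ≤ r) :
    EqOn (fun x => f |x - c|) (fun x => f (c - x)) (uIcc (c - r) c) := fun x hx => by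
  rw [uIcc_of_le (by linarith)] at hx
  simp only [abs_of_nonpos (sub_nonpos.2 hx.2), neg_sub]

theorem eqOn_comp_abs_sub_right (c : ℝ) (hr : 0 ≤ r) :
    EqOn (fun x => f |x - c|) (fun x => f (x - c)) (uIcc c (c + r)) := fun x hx => by
  rw [uIcc_of_le (by linarith)] at hx
  simp only [abs_of_nonneg (sub_nonneg.2 hx.1)]

theorem intervalIntegrable_comp_abs_sub (hf : IntervalIntegrable f volume 0 r) (c : ℝ)
    (hr : 0 ≤ r) : IntervalIntegrable (fun x => f |x - c|) volume (c - r) (c + r) := by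
  have hleft : IntervalIntegrable (fun x => f (c - x)) volume (c - r) c := by
    simpa using (hf.comp_sub_left c).symm
  have hright : IntervalIntegrable (fun x => f (x - c)) volume c (c + r) := by
    simpa [add_comm] using hf.comp_sub_right c
  exact (hleft.congr ((eqOn_comp_abs_sub_left c hr).symm.mono uIoc_subset_uIcc)).trans
    (hright.congr ((eqOn_comp_abs_sub_right c hr).symm.mono uIoc_subset_uIcc))

theorem integral_comp_abs_sub (hf : IntervalIntegrable f volume 0 r) (c : ℝ) (hr : 0 ≤ r) :
    ∫ x in (c - r)..(c + r), f |x - c| = 2 * ∫ t in 0..r, f t := by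
  have hint := intervalIntegrable_comp_abs_sub hf c hr
  have hleft : ∫ x in (c - r)..c, f |x - c| = ∫ t in 0..r, f t := by
    rw [intervalIntegral.integral_congr (eqOn_comp_abs_sub_left c hr),
      intervalIntegral.integral_comp_sub_left]
    simp
  have hright : ∫ x in c..(c + r), f |x - c| = ∫ t in 0..r, f t := by
    rw [intervalIntegral.integral_congr (eqOn_comp_abs_sub_right c hr),
      intervalIntegral.integral_comp_sub_right]
    simp
  have hsub : ∀ a b, c - r ≤ a → a ≤ b → b ≤ c + r → uIcc a b ⊆ uIcc (c - r) (c + r) :=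
    fun a b ha hab hb => by
      rw [uIcc_of_le hab, uIcc_of_le (by linarith)]
      exact Icc_subset_Icc ha hb
  rw [← intervalIntegral.integral_add_adjacent_intervals
    (hint.mono_set (hsub (c - r) c le_rfl (by linarith) (by linarith)))
    (hint.mono_set (hsub c (c + r) (by linarith) (by linarith) le_rfl)), hleft, hright, two_mul]

end Symmetric

section OneDimensional

variable {φ : ℝ → ℝ} {η : ℝ}

theorem intervalIntegrable_comp_div_of_monotoneOn (hφm : MonotoneOn φ (Ici 0)) (hη : 0 < η)
    {a : ℝ} (ha : 0 ≤ a) : IntervalIntegrable (fun t => φ (t / η)) volume 0 a := by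
  refine MonotoneOn.intervalIntegrable fun s hs t ht hst => hφm ?_ ?_ (by gcongr)
  all_goals rw [uIcc_of_le ha] at *; exact div_nonneg (by assumption : _ ∈ Icc _ _).1 hη.le

theorem lintegral_Ico_infDist_half (hφm : MonotoneOn φ (Ici 0)) (hφ0 : ∀ t, 0 ≤ t → 0 ≤ φ t)
    (hη : 0 < η) :
    ∫⁻ x in Ico (0:ℝ) 1, ENNReal.ofReal (φ (1 / η * infDist x {1/2})) =
      ENNReal.ofReal (2 * ∫ t in (0:ℝ)..(1/2), φ (t / η)) := by
  have hint := intervalIntegrable_comp_div_of_monotoneOn hφm hη (a := 1/2) (by norm_num)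
  have hint' := intervalIntegrable_comp_abs_sub hint (1/2) (by norm_num)
  have heq := integral_comp_abs_sub hint (1/2) (by norm_num)
  norm_num only at hint' heq
  simp only [infDist_singleton, Real.dist_eq, one_div_mul_eq_div]
  rw [lintegral_Ico_ofReal_eq zero_le_one hint' fun x _ => hφ0 _ (by positivity), heq]

theorem lintegral_Ico_comp_div_two (hφm : MonotoneOn φ (Ici 0)) (hφ0 : ∀ t, 0 ≤ t → 0 ≤ φ t)
    (hη : 0 < η) :
    ∫⁻ x in Ico (0:ℝ) 1, ENNReal.ofReal (φ (x / 2 / η)) =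
      ENNReal.ofReal (2 * ∫ t in (0:ℝ)..(1/2), φ (t / η)) := by
  have hint : IntervalIntegrable (fun x => φ (x / 2 / η)) volume 0 1 := by
    simpa only [div_div] using
      intervalIntegrable_comp_div_of_monotoneOn hφm (by positivity : 0 < 2 * η) zero_le_one
  rw [lintegral_Ico_ofReal_eq zero_le_one hint fun x hx => hφ0 _ (by positivity [hx.1.le]),
    intervalIntegral.integral_comp_div (fun t => φ (t / η)) two_ne_zero, zero_div, smul_eq_mul]

theorem ofReal_integral_le_lintegral_Ico_infDist (hφm : MonotoneOn φ (Ici 0))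
    (hφ0 : ∀ t, 0 ≤ t → 0 ≤ φ t) (hη : 0 < η) {N : ℝ} (C : Finset ℝ) (hC : C.Nonempty)
    (hCN : (C.card : ℝ) ≤ N) :
    ENNReal.ofReal (2 * ∫ t in (0:ℝ)..(1/2), φ (t / η)) ≤
      ∫⁻ x in Ico (0:ℝ) 1, ENNReal.ofReal (φ (N / η * infDist x C)) := by
  set ψ : ℝ → ℝ := fun u => φ (max u 0)
  have hψ : Monotone ψ := fun a b hab =>
    hφm (le_max_right a 0) (le_max_right b 0) (max_le_max_right 0 hab)
  have hψφ : ∀ u, 0 ≤ u → ψ u = φ u := fun u hu => by simp only [ψ, max_eq_left hu]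
  have hn : (0:ℝ) < C.card := by exact_mod_cast hC.card_pos
  have hNη : 0 ≤ N / η := div_nonneg (hn.le.trans hCN) hη.le
  calc ENNReal.ofReal (2 * ∫ t in (0:ℝ)..(1/2), φ (t / η))
      = ∫⁻ x in Ico (0:ℝ) 1, ENNReal.ofReal (ψ (x / 2 / η)) := by
        rw [← lintegral_Ico_comp_div_two hφm hφ0 hη]
        exact setLIntegral_congr_fun measurableSet_Ico fun x hx => by
          rw [hψφ _ (by positivity [hx.1])]
    _ ≤ ∫⁻ x in Ico (0:ℝ) 1, ENNReal.ofReal (ψ (N / η * (x / (2 * C.card)))) := by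
        refine setLIntegral_mono ?_ fun x hx => ENNReal.ofReal_le_ofReal (hψ ?_)
        · exact ENNReal.measurable_ofReal.comp
            (hψ.measurable.comp ((measurable_id.div_const _).const_mul _))
        · rw [div_div, div_mul_div_comm, div_le_div_iff₀ (by positivity) (by positivity)]
          nlinarith [hx.1, mul_le_mul_of_nonneg_left hCN hx.1]
    _ ≤ ∫⁻ x in Ico (0:ℝ) 1, ENNReal.ofReal (ψ (N / η * infDist x C)) :=
        lintegral_Ico_comp_div_le_lintegral_comp (continuous_infDist_pt _).measurable
          (by positivity)
          (fun s _ => (Measure.restrict_apply_le _ _).trans (volume_setOf_infDist_le C hC s))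
          (hψ.comp (monotone_id.const_mul hNη)) fun _ => hφ0 _ (le_max_right _ _)
    _ = ∫⁻ x in Ico (0:ℝ) 1, ENNReal.ofReal (φ (N / η * infDist x C)) := by
        simp only [hψφ _ (mul_nonneg hNη infDist_nonneg)]

end OneDimensional

theorem dSet_abs_eq_infDist (x : Rd 1) (C : Set (Rd 1)) :
    dSet (fun z : Rd 1 => |z 0|) x C = infDist (x 0) ((· 0) '' C) := by
  rw [dSet, infDist_eq_iInf, ← sInf_image', image_image]
  rfl

theorem lintegral_unitCube_one (h : ℝ → ℝ≥0∞) :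
    ∫⁻ x in unitCube 1, h (x 0) = ∫⁻ u in Ico (0:ℝ) 1, h u := by
  have hpre : unitCube 1 = MeasurableEquiv.funUnique (Fin 1) ℝ ⁻¹' Ico 0 1 := by
    ext x
    simp [unitCube, Fin.forall_fin_one]
  rw [hpre]
  exact (volume_preserving_funUnique (Fin 1) ℝ).setLIntegral_comp_preimage_emb
    (MeasurableEquiv.measurableEmbedding _) h _

theorem lintegral_unitCube_one_dSet (φ : ℝ → ℝ) (N η : ℝ) (C : Finset (Rd 1)) :
    ∫⁻ x in unitCube 1,
        ENNReal.ofReal (φ ((N / η) ^ (1 / ((1:ℕ):ℝ)) * dSet (fun z : Rd 1 => |z 0|) x C)) =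
      ∫⁻ u in Ico (0:ℝ) 1, ENNReal.ofReal (φ (N / η * infDist u (C.image (· 0) : Set ℝ))) := by
  simp only [Nat.cast_one, div_one, Real.rpow_one, dSet_abs_eq_infDist, Finset.coe_image]
  exact lintegral_unitCube_one fun u => ENNReal.ofReal (φ (N / η * infDist u _))

theorem card_image_eval_zero (C : Finset (Rd 1)) : (C.image (· 0)).card = C.card :=
  Finset.card_image_of_injective C (Equiv.funUnique (Fin 1) ℝ).injective

/-- In dimension `1` with the absolute value, `g(η) = 2 ∫_0^{1/2} φ(t/η) dt`. -/
theorem statement10 (φ : ℝ → ℝ) (hφ : PhiOK φ) (η : ℝ) (hη : 0 < η) :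
    gq (fun x : Rd 1 => |x 0|) φ η =
      ENNReal.ofReal (2 * ∫ t in (0:ℝ)..(1/2 : ℝ), φ (t / η)) := by
  obtain ⟨hφm, hφ0, -⟩ := hφ
  rw [gq, if_pos hη]
  refine le_antisymm ?_ (le_iInf₂ fun N _ => le_iInf₂ fun C hC => le_iInf fun hCN => ?_)
  · calc ⨅ N ∈ Ici (1:ℝ), fNq (fun x : Rd 1 => |x 0|) φ N η
        ≤ fNq (fun x : Rd 1 => |x 0|) φ 1 η := iInf₂_le 1 self_mem_Ici
      _ ≤ ∫⁻ u in Ico (0:ℝ) 1, ENNReal.ofReal (φ (1 / η * infDist u {1/2})) := by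
        refine (iInf₂_le {fun _ => 1/2} (Finset.singleton_nonempty _)).trans
          ((iInf_le _ (by simp)).trans_eq ?_)
        rw [lintegral_unitCube_one_dSet, Finset.image_singleton, Finset.coe_singleton]
      _ = _ := lintegral_Ico_infDist_half hφm hφ0 hη
  · rw [lintegral_unitCube_one_dSet]
    exact ofReal_integral_le_lintegral_Ico_infDist hφm hφ0 hη _ (hC.image _)
      (by rwa [card_image_eval_zero])

end
end

section
/- Assume I ∈ (0,∞) and that g is strictly convex on (0,∞). Then ḡ is differentiable on (0,∞) with ḡ'(a) = inf{b > 0 : −g'_+(b) ≤ a}, and any two optimal point densities agree λ^d-almost everywhere. -/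
/-!
`ḡ` is the infimum over `η > 0` of the affine functions `a ↦ g(η) + a η`. Put
`D(a) = inf {b > 0 : -g'₊(b) ≤ a}`; by convexity `η ↦ g(η) + a η` decreases on `(0, D(a))` and
increases on `(D(a), ∞)`, which gives `(a' - a) D(a') ≤ ḡ(a') - ḡ(a) ≤ (a' - a) D(a)` for
`a < a'`. Strict convexity makes `g'₊` strictly increasing, so `D` is continuous and `ḡ' = D`.

For uniqueness, the average of two optimal densities is admissible by convexity of `g` (extended
to `0` by its limit), hence optimal. An optimal density that is positive on a `μ_c`-non-null set
uses the whole budget `∫ g(ξ) dμ_c = 1`: otherwise lowering it slightly on a set where it is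
`≥ ε` keeps it admissible and decreases `∫ ξ`. So the convexity inequality is an equality
`μ_c`-a.e., and strict convexity gives `ξ₁ = ξ₂` `μ_c`-a.e. Where `dμ/dλ` vanishes, optimal
densities vanish, since cutting them off there costs nothing.
-/

open MeasureTheory Filter Set
open scoped ENNReal NNReal

noncomputable section

/-- `ḡ` as a real function of a real argument. -/
def gbarR {d : ℕ} (nrm : Rd d → ℝ) (φ : ℝ → ℝ) (a : ℝ) : ℝ :=
  (gbarq nrm φ (ENNReal.ofReal a)).toReal

/-- right derivative -/
def rightD (f : ℝ → ℝ) (a : ℝ) : ℝ := derivWithin f (Ioi a) a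

/-- left derivative -/
def leftD (f : ℝ → ℝ) (a : ℝ) : ℝ := derivWithin f (Iio a) a

/-- the expression `(1/κ)(∫ ḡ(κ/h) dμ_c - 1)` appearing in the dual formula. -/
def dualExpr {d : ℕ} (nrm : Rd d → ℝ) (φ : ℝ → ℝ) (μ : Measure (Rd d)) (κ : ℝ) : ℝ≥0∞ :=
  (ENNReal.ofReal κ)⁻¹ *
    ((∫⁻ x, gbarq nrm φ (ENNReal.ofReal κ / μ.rnDeriv volume x) ∂(muc μ)) - 1)


open Topology

namespace PointAllocation

section RightDerivative

variable {h : ℝ → ℝ} {x y : ℝ}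

lemma rightD_le_slope (hh : ConvexOn ℝ (Ioi 0) h) (hx : 0 < x) (hxy : x < y) :
    rightD h x ≤ slope h x y :=
  hh.rightDeriv_le_slope_of_mem_interior (by rwa [interior_Ioi]) (hx.trans hxy) hxy

lemma slope_le_rightD (hh : ConvexOn ℝ (Ioi 0) h) (hx : 0 < x) (hxy : x < y) :
    slope h x y ≤ rightD h y := by
  have hy : y ∈ interior (Ioi (0 : ℝ)) := by rw [interior_Ioi]; exact hx.trans hxy
  exact (hh.slope_le_leftDeriv_of_mem_interior hx hy hxy).trans
    (hh.leftDeriv_le_rightDeriv_of_mem_interior hy)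

lemma monotoneOn_rightD (hh : ConvexOn ℝ (Ioi 0) h) : MonotoneOn (rightD h) (Ioi 0) := by
  have := hh.monotoneOn_rightDeriv
  rwa [interior_Ioi] at this

lemma strictMonoOn_rightD (hh : StrictConvexOn ℝ (Ioi 0) h) :
    StrictMonoOn (rightD h) (Ioi 0) := fun x hx y _ hxy =>
  (hh.rightDeriv_lt_slope hx (mem_Ioi.2 (hx.trans hxy)) hxy
    (hh.convexOn.differentiableWithinAt_Ioi_of_mem_interior (by rwa [interior_Ioi]))).trans_le
    (slope_le_rightD hh.convexOn hx hxy)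

end RightDerivative

lemma hasDerivAt_of_forall_mul_le_sub_le {f D : ℝ → ℝ} {a : ℝ} {s : Set ℝ} (hs : s ∈ 𝓝 a)
    (hD : ContinuousAt D a)
    (hf : ∀ x ∈ s, ∀ y ∈ s, x < y → (y - x) * D y ≤ f y - f x ∧ f y - f x ≤ (y - x) * D x) :
    HasDerivAt f (D a) a := by
  have hslope : ∀ x ∈ s, x ≠ a → slope f a x ∈ Icc (min (D a) (D x)) (max (D a) (D x)) := by
    intro x hx hxa
    rcases hxa.lt_or_gt with hlt | hgt
    · obtain ⟨h₁, h₂⟩ := hf x hx a (mem_of_mem_nhds hs) hlt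
      rw [slope_comm, slope_def_field]
      exact ⟨(min_le_left _ _).trans ((le_div_iff₀' (sub_pos.2 hlt)).2 h₁),
        ((div_le_iff₀' (sub_pos.2 hlt)).2 h₂).trans (le_max_right _ _)⟩
    · obtain ⟨h₁, h₂⟩ := hf a (mem_of_mem_nhds hs) x hx hgt
      rw [slope_def_field]
      exact ⟨(min_le_right _ _).trans ((le_div_iff₀' (sub_pos.2 hgt)).2 h₁),
        ((div_le_iff₀' (sub_pos.2 hgt)).2 h₂).trans (le_max_left _ _)⟩
  have hmin : Tendsto (fun x => min (D a) (D x)) (𝓝[≠] a) (𝓝 (D a)) := by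
    have := (tendsto_const_nhds (x := D a)).min hD.tendsto
    rw [min_self] at this
    exact this.mono_left nhdsWithin_le_nhds
  have hmax : Tendsto (fun x => max (D a) (D x)) (𝓝[≠] a) (𝓝 (D a)) := by
    have := (tendsto_const_nhds (x := D a)).max hD.tendsto
    rw [max_self] at this
    exact this.mono_left nhdsWithin_le_nhds
  have hev : ∀ᶠ x in 𝓝[≠] a, slope f a x ∈ Icc (min (D a) (D x)) (max (D a) (D x)) := by
    filter_upwards [nhdsWithin_le_nhds hs, self_mem_nhdsWithin] with x hx hxa
    exact hslope x hx hxa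
  rw [hasDerivAt_iff_tendsto_slope]
  exact tendsto_of_tendsto_of_tendsto_of_le_of_le' hmin hmax
    (hev.mono fun _ hx => hx.1) (hev.mono fun _ hx => hx.2)

section PenalizedInf

def penalizedInf (h : ℝ → ℝ) (a : ℝ) : ℝ := ⨅ η : Ioi (0 : ℝ), (h η + a * η)

def penalizedArgmin (h : ℝ → ℝ) (a : ℝ) : ℝ := sInf {b : ℝ | 0 < b ∧ -rightD h b ≤ a}

variable {h : ℝ → ℝ} {m a a' b c η : ℝ}

lemma penalizedInf_le (hm : ∀ η, 0 < η → m ≤ h η) (ha : 0 ≤ a) (hη : 0 < η) :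
    penalizedInf h a ≤ h η + a * η := by
  have hbdd : BddBelow (range fun η : Ioi (0 : ℝ) => h η + a * η) := by
    refine ⟨m, ?_⟩
    rintro _ ⟨⟨η, hη⟩, rfl⟩
    exact le_add_of_le_of_nonneg (hm η hη) (mul_nonneg ha (le_of_lt hη))
  exact ciInf_le hbdd (⟨η, hη⟩ : Ioi (0 : ℝ))

lemma le_penalizedInf (H : ∀ η, 0 < η → c ≤ h η + a * η) : c ≤ penalizedInf h a :=
  le_ciInf fun η => H η η.2

lemma penalizedArgmin_nonneg : 0 ≤ penalizedArgmin h a :=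
  Real.sInf_nonneg fun _ hb => hb.1.le

lemma penalizedArgmin_le (hb : 0 < b) (hba : -rightD h b ≤ a) : penalizedArgmin h a ≤ b :=
  csInf_le ⟨0, fun _ hb => hb.1.le⟩ ⟨hb, hba⟩

lemma rightD_lt_of_lt_penalizedArgmin (hb : 0 < b) (hlt : b < penalizedArgmin h a) :
    rightD h b < -a := by
  by_contra! hle
  exact hlt.not_ge (penalizedArgmin_le hb (by linarith))

section Convex

variable (hh : ConvexOn ℝ (Ioi 0) h) (hm : ∀ η, 0 < η → m ≤ h η)
include hh hm

lemma exists_neg_rightD_le (ha : 0 < a) : ∃ b, 0 < b ∧ -rightD h b ≤ a := by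
  have hm1 : 0 ≤ (h 1 - m) / a := div_nonneg (by linarith [hm 1 one_pos]) ha.le
  refine ⟨2 + (h 1 - m) / a, by linarith, ?_⟩
  -- the chord of `h` from `1` to `b` has slope at least `(m - h 1) / (b - 1) ≥ -a`
  have hslope := slope_le_rightD hh one_pos (show (1 : ℝ) < 2 + (h 1 - m) / a by linarith)
  have hbound : -a ≤ slope h 1 (2 + (h 1 - m) / a) := by
    rw [slope_def_field, le_div_iff₀ (by linarith)]
    have : -a * (2 + (h 1 - m) / a - 1) = -a - (h 1 - m) := by field_simp; ring
    linarith [hm (2 + (h 1 - m) / a) (by linarith)]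
  linarith

lemma neg_rightD_le_of_penalizedArgmin_lt (ha : 0 < a) (hb : penalizedArgmin h a < b) :
    -rightD h b ≤ a := by
  obtain ⟨b', ⟨hb'0, hb'a⟩, hb'b⟩ :=
    (csInf_lt_iff ⟨0, fun _ hb => hb.1.le⟩ (exists_neg_rightD_le hh hm ha)).1 hb
  linarith [monotoneOn_rightD hh hb'0 (mem_Ioi.2 (hb'0.trans hb'b)) hb'b.le]

lemma penalizedArgmin_anti (ha : 0 < a) (haa : a ≤ a') :
    penalizedArgmin h a' ≤ penalizedArgmin h a :=
  csInf_le_csInf ⟨0, fun _ hb => hb.1.le⟩ (exists_neg_rightD_le hh hm ha)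
    fun _ hb => ⟨hb.1, hb.2.trans haa⟩

lemma penalized_le_of_penalizedArgmin_lt {x y : ℝ} (ha : 0 < a)
    (hx : penalizedArgmin h a < x) (hxy : x < y) : h x + a * x ≤ h y + a * y := by
  have hslope := rightD_le_slope hh (penalizedArgmin_nonneg.trans_lt hx) hxy
  have hder := neg_rightD_le_of_penalizedArgmin_lt hh hm ha hx
  rw [slope_def_field, le_div_iff₀ (sub_pos.2 hxy)] at hslope
  nlinarith

omit hm in
lemma penalized_le_of_lt_penalizedArgmin {x y : ℝ} (hx : 0 < x) (hxy : x < y)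
    (hy : y < penalizedArgmin h a) : h y + a * y ≤ h x + a * x := by
  have hslope := slope_le_rightD hh hx hxy
  have hder := rightD_lt_of_lt_penalizedArgmin (hx.trans hxy) hy
  rw [slope_def_field, div_le_iff₀ (sub_pos.2 hxy)] at hslope
  nlinarith

lemma penalizedInf_le_add (ha : 0 < a) (haa : a < a') :
    penalizedInf h a' ≤ penalizedInf h a + (a' - a) * penalizedArgmin h a := by
  set D := penalizedArgmin h a
  refine le_of_forall_pos_le_add fun δ hδ => ?_
  set ε := δ / (a' - a)
  have hε : 0 < ε := div_pos hδ (sub_pos.2 haa)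
  suffices penalizedInf h a' - (a' - a) * D - δ ≤ penalizedInf h a by linarith
  refine le_penalizedInf fun η hη => ?_
  obtain ⟨η', hη', hη'D, hψ⟩ : ∃ η', 0 < η' ∧ η' ≤ D + ε ∧ h η' + a * η' ≤ h η + a * η := by
    rcases le_or_gt η (D + ε) with hle | hgt
    · exact ⟨η, hη, hle, le_rfl⟩
    · exact ⟨D + ε, by linarith [penalizedArgmin_nonneg (h := h) (a := a)], le_rfl,
        penalized_le_of_penalizedArgmin_lt hh hm ha (by linarith) hgt⟩
  have hP := penalizedInf_le hm (ha.trans haa).le hη'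
  have hδ' : (a' - a) * ε = δ := mul_div_cancel₀ δ (sub_pos.2 haa).ne'
  have : (a' - a) * η' ≤ (a' - a) * (D + ε) :=
    mul_le_mul_of_nonneg_left hη'D (sub_pos.2 haa).le
  nlinarith

lemma add_le_penalizedInf (ha : 0 < a) (haa : a < a') :
    penalizedInf h a + (a' - a) * penalizedArgmin h a' ≤ penalizedInf h a' := by
  set D' := penalizedArgmin h a'
  refine le_of_forall_pos_le_add fun δ hδ => ?_
  set ε := δ / (a' - a)
  have hε : 0 < ε := div_pos hδ (sub_pos.2 haa)
  suffices penalizedInf h a + (a' - a) * D' - δ ≤ penalizedInf h a' by linarith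
  refine le_penalizedInf fun η hη => ?_
  obtain ⟨η', hη', hη'D, hψ⟩ : ∃ η', 0 < η' ∧ D' - ε ≤ η' ∧ h η' + a' * η' ≤ h η + a' * η := by
    rcases le_or_gt (D' - ε) η with hle | hgt
    · exact ⟨η, hη, hle, le_rfl⟩
    · exact ⟨D' - ε, hη.trans hgt, le_rfl,
        penalized_le_of_lt_penalizedArgmin hh hη hgt (by linarith)⟩
  have hP := penalizedInf_le hm ha.le hη'
  have hδ' : (a' - a) * ε = δ := mul_div_cancel₀ δ (sub_pos.2 haa).ne'
  have : (a' - a) * (D' - ε) ≤ (a' - a) * η' :=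
    mul_le_mul_of_nonneg_left hη'D (sub_pos.2 haa).le
  nlinarith

lemma exists_gt_sub_le_penalizedArgmin (ha : 0 < a) {ε : ℝ} (hε : 0 < ε) :
    ∃ a', a < a' ∧ penalizedArgmin h a - ε ≤ penalizedArgmin h a' := by
  by_cases hD : penalizedArgmin h a ≤ ε
  · exact ⟨a + 1, by linarith, by linarith [penalizedArgmin_nonneg (h := h) (a := a + 1)]⟩
  push Not at hD
  have hb : 0 < penalizedArgmin h a - ε := by linarith
  have hrb := rightD_lt_of_lt_penalizedArgmin hb (sub_lt_self _ hε)
  refine ⟨(a - rightD h (penalizedArgmin h a - ε)) / 2, by linarith,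
    le_csInf (exists_neg_rightD_le hh hm (by linarith)) fun b' ⟨hb', hb'a⟩ => ?_⟩
  by_contra! hlt
  linarith [monotoneOn_rightD hh hb' hb hlt.le]

end Convex

section StrictConvex

variable (hh : StrictConvexOn ℝ (Ioi 0) h) (hm : ∀ η, 0 < η → m ≤ h η)
include hh hm

lemma exists_lt_penalizedArgmin_le_add (ha : 0 < a) {ε : ℝ} (hε : 0 < ε) :
    ∃ a'', 0 < a'' ∧ a'' < a ∧ penalizedArgmin h a'' ≤ penalizedArgmin h a + ε := by
  set D := penalizedArgmin h a
  have hD : 0 ≤ D := penalizedArgmin_nonneg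
  have hder := neg_rightD_le_of_penalizedArgmin_lt hh.convexOn hm ha
    (show D < D + ε / 2 by linarith)
  have hmono := strictMonoOn_rightD hh (show D + ε / 2 ∈ Ioi 0 from mem_Ioi.2 (by linarith))
    (show D + ε ∈ Ioi 0 from mem_Ioi.2 (by linarith)) (by linarith)
  exact ⟨max (-rightD h (D + ε)) (a / 2), lt_max_of_lt_right (half_pos ha),
    max_lt (by linarith) (half_lt_self ha), penalizedArgmin_le (by linarith) (le_max_left _ _)⟩

lemma continuousAt_penalizedArgmin (ha : 0 < a) : ContinuousAt (penalizedArgmin h) a := by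
  rw [ContinuousAt, tendsto_order]
  refine ⟨fun l hl => ?_, fun u hu => ?_⟩
  · obtain ⟨a', haa', hle⟩ :=
      exists_gt_sub_le_penalizedArgmin hh.convexOn hm ha (half_pos (sub_pos.2 hl))
    filter_upwards [Ioo_mem_nhds ha haa'] with x hx
    linarith [penalizedArgmin_anti hh.convexOn hm hx.1 hx.2.le]
  · obtain ⟨a'', ha''0, ha''a, hle⟩ :=
      exists_lt_penalizedArgmin_le_add hh hm ha (half_pos (sub_pos.2 hu))
    filter_upwards [Ioi_mem_nhds ha''a] with x hx
    linarith [penalizedArgmin_anti hh.convexOn hm ha''0 (le_of_lt hx)]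

theorem hasDerivAt_penalizedInf (ha : 0 < a) :
    HasDerivAt (penalizedInf h) (penalizedArgmin h a) a :=
  hasDerivAt_of_forall_mul_le_sub_le (Ioi_mem_nhds ha) (continuousAt_penalizedArgmin hh hm ha)
    fun _ hx _ _ hxy => ⟨by linarith [add_le_penalizedInf hh.convexOn hm hx hxy],
      by linarith [penalizedInf_le_add hh.convexOn hm hx hxy]⟩

end StrictConvex

end PenalizedInf

section Midpoint

variable {f : ℝ → ℝ} {s : Set ℝ} {x y t : ℝ}

lemma _root_.ConvexOn.two_mul_midpoint_le (hf : ConvexOn ℝ s f) (hx : x ∈ s) (hy : y ∈ s) :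
    2 * f ((x + y) / 2) ≤ f x + f y := by
  have := hf.2 hx hy (by norm_num : (0 : ℝ) ≤ 1 / 2) (by norm_num : (0 : ℝ) ≤ 1 / 2) (by norm_num)
  simp only [smul_eq_mul] at this
  rw [show 1 / 2 * x + 1 / 2 * y = (x + y) / 2 by ring] at this
  linarith

lemma _root_.StrictConvexOn.two_mul_midpoint_lt (hf : StrictConvexOn ℝ s f) (hx : x ∈ s)
    (hy : y ∈ s) (hxy : x ≠ y) : 2 * f ((x + y) / 2) < f x + f y := by
  have := hf.2 hx hy hxy (by norm_num : (0 : ℝ) < 1 / 2) (by norm_num : (0 : ℝ) < 1 / 2)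
    (by norm_num)
  simp only [smul_eq_mul] at this
  rw [show 1 / 2 * x + 1 / 2 * y = (x + y) / 2 by ring] at this
  linarith

lemma two_mul_half_le_of_convexOn_Ioi (hf : ConvexOn ℝ (Ioi 0) f)
    (hf0 : ∀ x, 0 < x → f x ≤ f 0) (ht : 0 < t) : 2 * f (t / 2) ≤ f 0 + f t := by
  have hcont : ContinuousAt f t := (hf.continuousOn isOpen_Ioi).continuousAt (Ioi_mem_nhds ht)
  have hsub : Tendsto (fun ε => t - ε) (𝓝[>] 0) (𝓝 t) :=
    ((continuous_const.sub continuous_id).tendsto' 0 t (sub_zero t)).mono_left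
      nhdsWithin_le_nhds
  -- let `ε ↓ 0` in `2 f (t / 2) ≤ f ε + f (t - ε) ≤ f 0 + f (t - ε)`
  refine ge_of_tendsto (tendsto_const_nhds.add (hcont.tendsto.comp hsub)) ?_
  filter_upwards [Ioo_mem_nhdsGT (half_pos ht)] with ε ⟨hε, hεt⟩
  have := hf.two_mul_midpoint_le (mem_Ioi.2 hε) (mem_Ioi.2 (show 0 < t - ε by linarith))
  rw [show (ε + (t - ε)) / 2 = t / 2 by ring] at this
  simp only [Function.comp_apply]
  linarith [hf0 ε hε]

lemma two_mul_half_lt_of_strictConvexOn_Ioi (hf : StrictConvexOn ℝ (Ioi 0) f)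
    (hf0 : ∀ x, 0 < x → f x ≤ f 0) (ht : 0 < t) : 2 * f (t / 2) < f 0 + f t := by
  -- `t / 2` is the midpoint of `t / 4` and `3 t / 4`, which are midpoints of `[0, t / 2]` and
  -- `[t / 2, t]`
  have h₁ := hf.two_mul_midpoint_lt (mem_Ioi.2 (show 0 < t / 4 by linarith))
    (mem_Ioi.2 (show 0 < 3 * t / 4 by linarith)) (by linarith)
  have h₂ := two_mul_half_le_of_convexOn_Ioi hf.convexOn hf0 (half_pos ht)
  have h₃ := hf.convexOn.two_mul_midpoint_le (mem_Ioi.2 (half_pos ht)) (mem_Ioi.2 ht)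
  rw [show (t / 4 + 3 * t / 4) / 2 = t / 2 by ring] at h₁
  rw [show t / 2 / 2 = t / 4 by ring] at h₂
  rw [show (t / 2 + t) / 2 = 3 * t / 4 by ring] at h₃
  linarith

end Midpoint

section ENNRealValued

variable {F : ℝ → ℝ≥0∞} {s t η : ℝ}

lemma ne_top_of_strictConvexOn_toReal (hanti : Antitone F)
    (hconv : StrictConvexOn ℝ (Ioi 0) fun η => (F η).toReal) (hη : 0 < η) : F η ≠ ⊤ := by
  intro htop
  have hF : ∀ x ≤ η, (F x).toReal = 0 := fun x hx => by
    have := hanti hx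
    rw [htop, top_le_iff] at this
    rw [this, ENNReal.toReal_top]
  have := hconv.two_mul_midpoint_lt (mem_Ioi.2 (half_pos hη)) (mem_Ioi.2 hη)
    (half_lt_self hη).ne
  rw [hF _ (half_lt_self hη).le, hF η le_rfl] at this
  linarith [ENNReal.toReal_nonneg (a := F ((η / 2 + η) / 2))]

lemma continuousOn_of_convexOn_toReal (hfin : ∀ η, 0 < η → F η ≠ ⊤)
    (hconv : ConvexOn ℝ (Ioi 0) fun η => (F η).toReal) : ContinuousOn F (Ioi 0) :=
  (ENNReal.continuous_ofReal.comp_continuousOn (hconv.continuousOn isOpen_Ioi)).congr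
    fun η hη => (ENNReal.ofReal_toReal (hfin η hη)).symm

variable (hanti : Antitone F) (hconv : StrictConvexOn ℝ (Ioi 0) fun η => (F η).toReal)
include hanti hconv

lemma add_self_midpoint_lt (hs : 0 ≤ s) (ht : 0 ≤ t) (hst : s ≠ t) (hFs : F s ≠ ⊤)
    (hFt : F t ≠ ⊤) : F ((s + t) / 2) + F ((s + t) / 2) < F s + F t := by
  wlog hlt : s < t generalizing s t
  · rw [add_comm s t, add_comm (F s)]
    exact this ht hs hst.symm hFt hFs (hst.lt_or_gt.resolve_left hlt)
  have hFm := ne_top_of_strictConvexOn_toReal hanti hconv (show 0 < (s + t) / 2 by linarith)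
  rw [← ENNReal.toReal_lt_toReal (ENNReal.add_ne_top.2 ⟨hFm, hFm⟩)
    (ENNReal.add_ne_top.2 ⟨hFs, hFt⟩), ENNReal.toReal_add hFm hFm, ENNReal.toReal_add hFs hFt,
    ← two_mul]
  rcases hs.eq_or_lt with rfl | hs0
  · rw [zero_add]
    exact two_mul_half_lt_of_strictConvexOn_Ioi hconv
      (fun x hx => ENNReal.toReal_mono hFs (hanti hx.le)) hlt
  · exact hconv.two_mul_midpoint_lt hs0 (mem_Ioi.2 (hs0.trans hlt)) hst

lemma add_self_midpoint_le (hs : 0 ≤ s) (ht : 0 ≤ t) :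
    F ((s + t) / 2) + F ((s + t) / 2) ≤ F s + F t := by
  rcases eq_or_ne s t with rfl | hst
  · rw [add_self_div_two]
  by_cases hFs : F s = ⊤
  · simp [hFs]
  by_cases hFt : F t = ⊤
  · simp [hFt]
  exact (add_self_midpoint_lt hanti hconv hs ht hst hFs hFt).le

end ENNRealValued

section Quantization

variable {d : ℕ} {nrm : Rd d → ℝ} {φ : ℝ → ℝ}

lemma dSet_nonneg (hnrm : ∀ x, 0 ≤ nrm x) (x : Rd d) (A : Set (Rd d)) : 0 ≤ dSet nrm x A :=
  Real.sInf_nonneg (by rintro _ ⟨y, _, rfl⟩; exact hnrm _)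

lemma fNq_anti (hnrm : ∀ x, 0 ≤ nrm x) (hφ : MonotoneOn φ (Ici 0)) {N η η' : ℝ} (hN : 0 ≤ N)
    (hη : 0 < η) (hηη' : η ≤ η') : fNq nrm φ N η' ≤ fNq nrm φ N η := by
  refine iInf_mono fun C => iInf_mono fun _ => iInf_mono fun _ =>
    lintegral_mono fun x => ENNReal.ofReal_le_ofReal ?_
  have hd := dSet_nonneg hnrm x (C : Set (Rd d))
  have hη' : 0 ≤ N / η' := div_nonneg hN (hη.trans_le hηη').le
  have hr : (N / η') ^ (1 / (d : ℝ)) ≤ (N / η) ^ (1 / (d : ℝ)) :=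
    Real.rpow_le_rpow hη' (div_le_div_of_nonneg_left hN hη hηη') (by positivity)
  have hr0 : 0 ≤ (N / η') ^ (1 / (d : ℝ)) := Real.rpow_nonneg hη' _
  exact hφ (mul_nonneg hr0 hd) (mul_nonneg (hr0.trans hr) hd) (mul_le_mul_of_nonneg_right hr hd)

lemma gq_antitone (hnrm : ∀ x, 0 ≤ nrm x) (hφ : MonotoneOn φ (Ici 0)) :
    Antitone (gq nrm φ) := by
  intro x y hxy
  by_cases hy : 0 < y
  · by_cases hx : 0 < x
    · simp only [gq, if_pos hx, if_pos hy]
      exact iInf₂_mono fun N hN => fNq_anti hnrm hφ (zero_le_one.trans hN) hx hxy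
    · simp only [gq, if_neg hx, if_pos hy]
      exact le_iSup₂ (f := fun η (_ : η ∈ Ioi (0 : ℝ)) => ⨅ N ∈ Ici (1 : ℝ), fNq nrm φ N η) y hy
  · simp only [gq, if_neg hy, if_neg fun hx : 0 < x => hy (hx.trans_le hxy), le_rfl]

lemma gbarR_eq_penalizedInf (hfin : ∀ η, 0 < η → gq nrm φ η ≠ ⊤) {a : ℝ} (ha : 0 ≤ a) :
    gbarR nrm φ a = penalizedInf (fun η => (gq nrm φ η).toReal) a := by
  have hfin' : ∀ η : Ioi (0 : ℝ), gq nrm φ η + ENNReal.ofReal a * ENNReal.ofReal η ≠ ⊤ :=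
    fun η => ENNReal.add_ne_top.2 ⟨hfin η η.2, by finiteness⟩
  rw [gbarR, gbarq, iInf_subtype', ENNReal.toReal_iInf hfin']
  refine iInf_congr fun η => ?_
  rw [ENNReal.toReal_add (hfin η η.2) (by finiteness), ENNReal.toReal_mul,
    ENNReal.toReal_ofReal ha, ENNReal.toReal_ofReal (le_of_lt η.2)]

end Quantization

lemma exists_pos_measurableSet_forall_le {α : Type*} [MeasurableSpace α] {ν : Measure α}
    {ξ : α → ℝ} (hξ : AEMeasurable ξ ν) (hpos : ν {x | 0 < ξ x} ≠ 0) :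
    ∃ ε > 0, ∃ A, MeasurableSet A ∧ (∀ x ∈ A, ε ≤ ξ x) ∧ ν A ≠ 0 := by
  have hcover : {x | 0 < ξ x} ⊆ ⋃ n : ℕ, {x | 1 / ((n : ℝ) + 1) ≤ ξ x} := fun x hx => by
    obtain ⟨n, hn⟩ := exists_nat_one_div_lt (show 0 < ξ x from hx)
    exact mem_iUnion.2 ⟨n, hn.le⟩
  obtain ⟨n, hn⟩ : ∃ n : ℕ, ν {x | 1 / ((n : ℝ) + 1) ≤ ξ x} ≠ 0 := by
    by_contra! h
    exact hpos (measure_mono_null hcover (measure_iUnion_null h))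
  obtain ⟨A, hAsub, hA, hAeq⟩ :=
    (nullMeasurableSet_le aemeasurable_const hξ).exists_measurable_subset_ae_eq
  exact ⟨_, Nat.one_div_pos_of_nat, A, hA, hAsub, by rwa [measure_congr hAeq]⟩

section Density

variable {d : ℕ} {nrm : Rd d → ℝ} {φ : ℝ → ℝ} {μ : Measure (Rd d)} {ξ ξ' ξ₁ ξ₂ : Rd d → ℝ}

def IsAdmissibleDensity (nrm : Rd d → ℝ) (φ : ℝ → ℝ) (μ : Measure (Rd d)) (ξ : Rd d → ℝ) :
    Prop :=
  (∀ x, 0 ≤ ξ x) ∧ Integrable ξ volume ∧ ∫⁻ x, gq nrm φ (ξ x) ∂(muc μ) ≤ 1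

def IsOptimalDensity (nrm : Rd d → ℝ) (φ : ℝ → ℝ) (μ : Measure (Rd d)) (ξ : Rd d → ℝ) : Prop :=
  IsAdmissibleDensity nrm φ μ ξ ∧ ENNReal.ofReal (∫ x, ξ x) = pav nrm φ μ

lemma muc_absolutelyContinuous : muc μ ≪ volume :=
  withDensity_absolutelyContinuous _ _

lemma measurableSet_rnDeriv_eq_zero : MeasurableSet {x | μ.rnDeriv volume x = 0} :=
  μ.measurable_rnDeriv volume (measurableSet_singleton 0)

lemma muc_rnDeriv_eq_zero : muc μ {x | μ.rnDeriv volume x = 0} = 0 := by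
  rw [muc, withDensity_apply _ measurableSet_rnDeriv_eq_zero,
    setLIntegral_congr_fun measurableSet_rnDeriv_eq_zero fun x hx => hx]
  simp

lemma volume_restrict_rnDeriv_ne_zero_absolutelyContinuous :
    volume.restrict {x | μ.rnDeriv volume x = 0}ᶜ ≪ muc μ := by
  have hZc := measurableSet_rnDeriv_eq_zero (μ := μ).compl
  refine (withDensity_absolutelyContinuous' (μ.measurable_rnDeriv volume).aemeasurable
    ((ae_restrict_iff' hZc).2 (ae_of_all _ fun x hx => hx))).trans ?_
  rw [muc, ← restrict_withDensity hZc]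
  exact Measure.absolutelyContinuous_of_le Measure.restrict_le_self

lemma aemeasurable_gq_comp (hnrm : ∀ x, 0 ≤ nrm x) (hφ : MonotoneOn φ (Ici 0))
    (hξ : AEMeasurable ξ volume) : AEMeasurable (fun x => gq nrm φ (ξ x)) (muc μ) :=
  (gq_antitone hnrm hφ).measurable.comp_aemeasurable (hξ.mono_ac muc_absolutelyContinuous)

lemma pav_le_of_isAdmissibleDensity (hξ : IsAdmissibleDensity nrm φ μ ξ) :
    pav nrm φ μ ≤ ENNReal.ofReal (∫ x, ξ x) :=
  (iInf₂_le ξ hξ.1).trans (iInf₂_le hξ.2.1 hξ.2.2)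

lemma IsOptimalDensity.integral_le (hξ : IsOptimalDensity nrm φ μ ξ)
    (hξ' : IsAdmissibleDensity nrm φ μ ξ') : ∫ x, ξ x ≤ ∫ x, ξ' x :=
  (ENNReal.ofReal_le_ofReal_iff (integral_nonneg hξ'.1)).1
    (hξ.2.symm ▸ pav_le_of_isAdmissibleDensity hξ')

lemma IsOptimalDensity.ae_eq_zero_of_rnDeriv_eq_zero (hξ : IsOptimalDensity nrm φ μ ξ) :
    ∀ᵐ x ∂(volume.restrict {x | μ.rnDeriv volume x = 0}), ξ x = 0 := by
  set Z := {x | μ.rnDeriv volume x = 0}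
  have hZ : MeasurableSet Z := measurableSet_rnDeriv_eq_zero
  obtain ⟨hn, hi, hc⟩ := hξ.1
  have hadm : IsAdmissibleDensity nrm φ μ (Zᶜ.indicator ξ) := by
    refine ⟨fun x => indicator_nonneg (fun x _ => hn x) x, hi.indicator hZ.compl, ?_⟩
    calc ∫⁻ x, gq nrm φ (Zᶜ.indicator ξ x) ∂(muc μ) = ∫⁻ x, gq nrm φ (ξ x) ∂(muc μ) := by
          refine lintegral_congr_ae ?_
          filter_upwards [compl_mem_ae_iff.2 muc_rnDeriv_eq_zero] with x hx
          rw [indicator_of_mem hx]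
      _ ≤ 1 := hc
  have hle := hξ.integral_le hadm
  rw [integral_indicator hZ.compl, ← integral_add_compl hZ hi] at hle
  have hZ0 : ∫ x in Z, ξ x = 0 :=
    le_antisymm (by linarith) (setIntegral_nonneg hZ fun x _ => hn x)
  exact (setIntegral_eq_zero_iff_of_nonneg_ae (ae_of_all _ hn) hi.integrableOn).1 hZ0

lemma ae_eq_of_ae_eq_muc (h : ξ₁ =ᵐ[muc μ] ξ₂)
    (h₁ : ∀ᵐ x ∂(volume.restrict {x | μ.rnDeriv volume x = 0}), ξ₁ x = 0)
    (h₂ : ∀ᵐ x ∂(volume.restrict {x | μ.rnDeriv volume x = 0}), ξ₂ x = 0) :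
    ξ₁ =ᵐ[volume] ξ₂ := by
  rw [Filter.EventuallyEq, ← Measure.restrict_add_restrict_compl (μ := volume)
    (measurableSet_rnDeriv_eq_zero (μ := μ)), ae_add_measure_iff]
  refine ⟨?_, volume_restrict_rnDeriv_ne_zero_absolutelyContinuous.ae_eq h⟩
  filter_upwards [h₁, h₂] with x hx₁ hx₂
  rw [hx₁, hx₂]

end Density

section Uniqueness

variable {d : ℕ} {nrm : Rd d → ℝ} {φ : ℝ → ℝ} {μ : Measure (Rd d)} {ξ ξ₁ ξ₂ : Rd d → ℝ}
  (hnrm : ∀ x, 0 ≤ nrm x) (hφ : MonotoneOn φ (Ici 0))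
  (hconv : StrictConvexOn ℝ (Ioi 0) fun η => (gq nrm φ η).toReal)
include hnrm hφ hconv

lemma lintegral_gq_midpoint_le (hξ₁ : ∀ x, 0 ≤ ξ₁ x) (hξ₂ : ∀ x, 0 ≤ ξ₂ x) :
    ∫⁻ x, (gq nrm φ ((ξ₁ x + ξ₂ x) / 2) + gq nrm φ ((ξ₁ x + ξ₂ x) / 2)) ∂(muc μ) ≤
      ∫⁻ x, (gq nrm φ (ξ₁ x) + gq nrm φ (ξ₂ x)) ∂(muc μ) :=
  lintegral_mono fun x =>
    add_self_midpoint_le (gq_antitone hnrm hφ) hconv (hξ₁ x) (hξ₂ x)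

lemma IsOptimalDensity.midpoint (hξ₁ : IsOptimalDensity nrm φ μ ξ₁)
    (hξ₂ : IsOptimalDensity nrm φ μ ξ₂) :
    IsOptimalDensity nrm φ μ fun x => (ξ₁ x + ξ₂ x) / 2 := by
  obtain ⟨⟨hn₁, hi₁, hc₁⟩, hv₁⟩ := hξ₁
  obtain ⟨⟨hn₂, hi₂, hc₂⟩, hv₂⟩ := hξ₂
  have hgm : AEMeasurable (fun x => gq nrm φ ((ξ₁ x + ξ₂ x) / 2)) (muc μ) :=
    aemeasurable_gq_comp hnrm hφ ((hi₁.add hi₂).div_const 2).aemeasurable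
  have hg₁ := aemeasurable_gq_comp (μ := μ) hnrm hφ hi₁.aemeasurable
  have hmid := lintegral_gq_midpoint_le (μ := μ) hnrm hφ hconv hn₁ hn₂
  rw [lintegral_add_left' hgm, lintegral_add_left' hg₁] at hmid
  have hc : ∫⁻ x, gq nrm φ ((ξ₁ x + ξ₂ x) / 2) ∂(muc μ) ≤ 1 :=
    not_lt.1 fun hlt => (ENNReal.add_lt_add hlt hlt).not_ge (hmid.trans (add_le_add hc₁ hc₂))
  have heq : ∫ x, ξ₁ x = ∫ x, ξ₂ x :=
    (ENNReal.ofReal_eq_ofReal_iff (integral_nonneg hn₁) (integral_nonneg hn₂)).1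
      (hv₁.trans hv₂.symm)
  refine ⟨⟨fun x => by linarith [hn₁ x, hn₂ x], (hi₁.add hi₂).div_const 2, hc⟩, ?_⟩
  rw [integral_div, integral_add hi₁ hi₂, ← heq, add_self_div_two, hv₁]

lemma tendsto_lintegral_gq_sub_indicator [IsFiniteMeasure μ] (hξ : AEMeasurable ξ volume)
    (hfin : ∫⁻ x, gq nrm φ (ξ x) ∂(muc μ) ≠ ⊤) {A : Set (Rd d)} (hA : MeasurableSet A) {ε : ℝ}
    (hε : 0 < ε) (hAξ : ∀ x ∈ A, ε ≤ ξ x) :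
    Tendsto (fun δ => ∫⁻ x, gq nrm φ (ξ x - A.indicator (fun _ => δ) x) ∂(muc μ)) (𝓝[>] 0)
      (𝓝 (∫⁻ x, gq nrm φ (ξ x) ∂(muc μ))) := by
  have hanti := gq_antitone hnrm hφ
  have hcont := continuousOn_of_convexOn_toReal
    (fun _ hη => ne_top_of_strictConvexOn_toReal hanti hconv hη) hconv.convexOn
  refine tendsto_lintegral_filter_of_dominated_convergence'
    (fun x => A.indicator (fun _ => gq nrm φ (ε / 2)) x + gq nrm φ (ξ x))
    (Eventually.of_forall fun δ => aemeasurable_gq_comp hnrm hφ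
      (hξ.sub (measurable_const.indicator hA).aemeasurable)) ?_ ?_ (ae_of_all _ fun x => ?_)
  · filter_upwards [Ioo_mem_nhdsGT (half_pos hε)] with δ hδ
    refine ae_of_all _ fun x => ?_
    by_cases hx : x ∈ A
    · simp only [indicator_of_mem hx]
      exact le_add_right (hanti (by linarith [hAξ x hx, hδ.2]))
    · simp only [indicator_of_notMem hx, sub_zero, zero_add, le_rfl]
  · rw [lintegral_add_left ((measurable_const.indicator hA)), lintegral_indicator_const hA]
    have hmucA : muc μ A ≠ ⊤ :=
      ne_top_of_le_ne_top (measure_ne_top μ A) (Measure.withDensity_rnDeriv_le μ volume A)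
    exact ENNReal.add_ne_top.2
      ⟨ENNReal.mul_ne_top (ne_top_of_strictConvexOn_toReal hanti hconv (half_pos hε)) hmucA, hfin⟩
  · by_cases hx : x ∈ A
    · simp only [indicator_of_mem hx]
      have hsub : Tendsto (fun δ => ξ x - δ) (𝓝[>] 0) (𝓝 (ξ x)) :=
        ((continuous_const.sub continuous_id).tendsto' 0 (ξ x) (sub_zero _)).mono_left
          nhdsWithin_le_nhds
      exact ((hcont.continuousAt (Ioi_mem_nhds (hε.trans_le (hAξ x hx)))).tendsto.comp hsub)
    · simp only [indicator_of_notMem hx, sub_zero]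
      exact tendsto_const_nhds

lemma IsAdmissibleDensity.exists_integral_lt [IsFiniteMeasure μ]
    (hξ : IsAdmissibleDensity nrm φ μ ξ) (hslack : ∫⁻ x, gq nrm φ (ξ x) ∂(muc μ) < 1)
    (hpos : muc μ {x | 0 < ξ x} ≠ 0) :
    ∃ ξ', IsAdmissibleDensity nrm φ μ ξ' ∧ ∫ x, ξ' x < ∫ x, ξ x := by
  obtain ⟨hn, hi, -⟩ := hξ
  obtain ⟨ε, hε, A, hA, hAξ, hA0⟩ :=
    exists_pos_measurableSet_forall_le (hi.aemeasurable.mono_ac muc_absolutelyContinuous) hpos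
  have hvolA : volume A ≠ 0 := fun h => hA0 (muc_absolutelyContinuous h)
  have hvolA' : volume A ≠ ⊤ := ne_top_of_le_ne_top (hi.measure_norm_ge_lt_top hε).ne
    (measure_mono fun x hx => (hAξ x hx).trans (le_abs_self _))
  obtain ⟨δ, hδc, hδ, hδε⟩ := (((tendsto_lintegral_gq_sub_indicator hnrm hφ hconv hi.aemeasurable
    hslack.ne_top hA hε hAξ).eventually_lt_const hslack).and (Ioo_mem_nhdsGT hε)).exists
  have hind : Integrable (A.indicator fun _ => δ) volume :=
    (integrable_indicator_iff hA).2 (integrableOn_const hvolA')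
  refine ⟨fun x => ξ x - A.indicator (fun _ => δ) x, ⟨fun x => ?_, hi.sub hind, hδc.le⟩, ?_⟩
  · dsimp only
    by_cases hx : x ∈ A
    · rw [indicator_of_mem hx]; linarith [hAξ x hx]
    · rw [indicator_of_notMem hx, sub_zero]; exact hn x
  · rw [integral_sub hi hind, integral_indicator_const _ hA, smul_eq_mul, sub_lt_self_iff]
    exact mul_pos (ENNReal.toReal_pos hvolA hvolA') hδ

lemma IsOptimalDensity.one_le_lintegral_gq [IsFiniteMeasure μ]
    (hξ : IsOptimalDensity nrm φ μ ξ) (hpos : muc μ {x | 0 < ξ x} ≠ 0) :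
    1 ≤ ∫⁻ x, gq nrm φ (ξ x) ∂(muc μ) := by
  by_contra! hslack
  obtain ⟨ξ', hξ', hlt⟩ := hξ.1.exists_integral_lt hnrm hφ hconv hslack hpos
  exact hlt.not_ge (hξ.integral_le hξ')

theorem IsOptimalDensity.ae_eq_muc [IsFiniteMeasure μ] (hξ₁ : IsOptimalDensity nrm φ μ ξ₁)
    (hξ₂ : IsOptimalDensity nrm φ μ ξ₂) : ξ₁ =ᵐ[muc μ] ξ₂ := by
  by_contra hne
  have hanti := gq_antitone hnrm hφ
  have hm := hξ₁.midpoint hnrm hφ hconv hξ₂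
  have hpos : muc μ {x | 0 < (ξ₁ x + ξ₂ x) / 2} ≠ 0 := fun h0 =>
    hne <| ae_iff.2 <| measure_mono_null (fun x (hx : ξ₁ x ≠ ξ₂ x) => by
      by_contra hle
      have hle : (ξ₁ x + ξ₂ x) / 2 ≤ 0 := not_lt.1 hle
      exact hx (by linarith [hξ₁.1.1 x, hξ₂.1.1 x])) h0
  have hg₁ := aemeasurable_gq_comp (μ := μ) hnrm hφ hξ₁.1.2.1.aemeasurable
  have hg₂ := aemeasurable_gq_comp (μ := μ) hnrm hφ hξ₂.1.2.1.aemeasurable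
  have hgm := aemeasurable_gq_comp (μ := μ) hnrm hφ hm.1.2.1.aemeasurable
  have hsum : ∫⁻ x, (gq nrm φ (ξ₁ x) + gq nrm φ (ξ₂ x)) ∂(muc μ) ≤ 1 + 1 := by
    rw [lintegral_add_left' hg₁]
    exact add_le_add hξ₁.1.2.2 hξ₂.1.2.2
  have hone := hm.one_le_lintegral_gq hnrm hφ hconv hpos
  -- the optimal midpoint exhausts the budget, so the midpoint inequality is an a.e. equality
  have hequal : (fun x => gq nrm φ ((ξ₁ x + ξ₂ x) / 2) + gq nrm φ ((ξ₁ x + ξ₂ x) / 2))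
      =ᵐ[muc μ] fun x => gq nrm φ (ξ₁ x) + gq nrm φ (ξ₂ x) := by
    refine ae_eq_of_ae_le_of_lintegral_le
      (ae_of_all _ fun x => add_self_midpoint_le hanti hconv (hξ₁.1.1 x) (hξ₂.1.1 x))
      (ne_top_of_le_ne_top (by finiteness)
        ((lintegral_gq_midpoint_le hnrm hφ hconv hξ₁.1.1 hξ₂.1.1).trans hsum))
      (hg₁.add hg₂) ?_
    calc ∫⁻ x, (gq nrm φ (ξ₁ x) + gq nrm φ (ξ₂ x)) ∂(muc μ) ≤ 1 + 1 := hsum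
      _ ≤ _ := add_le_add hone hone
      _ = _ := (lintegral_add_left' hgm _).symm
  apply hne
  filter_upwards [hequal, ae_lt_top' hg₁ (ne_top_of_le_ne_top ENNReal.one_ne_top hξ₁.1.2.2),
    ae_lt_top' hg₂ (ne_top_of_le_ne_top ENNReal.one_ne_top hξ₂.1.2.2)] with x hx hx₁ hx₂
  by_contra hxne
  exact (add_self_midpoint_lt hanti hconv (hξ₁.1.1 x) (hξ₂.1.1 x) hxne hx₁.ne hx₂.ne).ne hx

end Uniqueness

end PointAllocation

theorem statement16_general {d : ℕ}
    (nrm : Rd d → ℝ) (hnrm : IsNorm nrm) (φ : ℝ → ℝ) (hφ : PhiOK φ)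
    (μ : Measure (Rd d)) [IsProbabilityMeasure μ]
    (hconv : StrictConvexOn ℝ (Ioi 0) (fun η => (gq nrm φ η).toReal)) :
    (∀ a : ℝ, 0 < a →
      HasDerivAt (gbarR nrm φ)
        (sInf {b : ℝ | 0 < b ∧ -(rightD (fun η => (gq nrm φ η).toReal) b) ≤ a}) a) ∧
    (∀ ξ₁ ξ₂ : Rd d → ℝ,
      ((∀ x, 0 ≤ ξ₁ x) ∧ Integrable ξ₁ volume ∧
        (∫⁻ x, gq nrm φ (ξ₁ x) ∂(muc μ)) ≤ 1 ∧ ENNReal.ofReal (∫ x, ξ₁ x) = pav nrm φ μ) →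
      ((∀ x, 0 ≤ ξ₂ x) ∧ Integrable ξ₂ volume ∧
        (∫⁻ x, gq nrm φ (ξ₂ x) ∂(muc μ)) ≤ 1 ∧ ENNReal.ofReal (∫ x, ξ₂ x) = pav nrm φ μ) →
      ξ₁ =ᵐ[(volume : Measure (Rd d))] ξ₂) := by
  open PointAllocation in
  have hanti := gq_antitone hnrm.1 hφ.1
  refine ⟨fun a ha => ?_, fun ξ₁ ξ₂ ⟨hn₁, hi₁, hc₁, hv₁⟩ ⟨hn₂, hi₂, hc₂, hv₂⟩ => ?_⟩
  · have hfin := fun η (hη : 0 < η) => ne_top_of_strictConvexOn_toReal hanti hconv hη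
    have hder := hasDerivAt_penalizedInf hconv (fun _ _ => ENNReal.toReal_nonneg) ha
    refine hder.congr_of_eventuallyEq ?_
    filter_upwards [Ioi_mem_nhds ha] with x hx
    exact gbarR_eq_penalizedInf hfin (le_of_lt hx)
  · have hξ₁ : IsOptimalDensity nrm φ μ ξ₁ := ⟨⟨hn₁, hi₁, hc₁⟩, hv₁⟩
    have hξ₂ : IsOptimalDensity nrm φ μ ξ₂ := ⟨⟨hn₂, hi₂, hc₂⟩, hv₂⟩
    exact ae_eq_of_ae_eq_muc (hξ₁.ae_eq_muc hnrm.1 hφ.1 hconv hξ₂)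
      hξ₁.ae_eq_zero_of_rnDeriv_eq_zero hξ₂.ae_eq_zero_of_rnDeriv_eq_zero

/-- If `I ∈ (0,∞)` and `g` is strictly convex on `(0,∞)`, then `ḡ` is differentiable with
`ḡ'(a) = inf{b > 0 : -g'_+(b) ≤ a}`, and optimal point densities are a.e. unique. -/
theorem statement16 {d : ℕ} (hd : 0 < d)
    (nrm : Rd d → ℝ) (hnrm : IsNorm nrm) (φ : ℝ → ℝ) (hφ : PhiOK φ)
    (μ : Measure (Rd d)) [IsProbabilityMeasure μ]
    (hI0 : 0 < pav nrm φ μ) (hItop : pav nrm φ μ ≠ ⊤)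
    (hconv : StrictConvexOn ℝ (Ioi 0) (fun η => (gq nrm φ η).toReal)) :
    (∀ a : ℝ, 0 < a →
      HasDerivAt (gbarR nrm φ)
        (sInf {b : ℝ | 0 < b ∧ -(rightD (fun η => (gq nrm φ η).toReal) b) ≤ a}) a) ∧
    (∀ ξ₁ ξ₂ : Rd d → ℝ,
      ((∀ x, 0 ≤ ξ₁ x) ∧ Integrable ξ₁ volume ∧
        (∫⁻ x, gq nrm φ (ξ₁ x) ∂(muc μ)) ≤ 1 ∧ ENNReal.ofReal (∫ x, ξ₁ x) = pav nrm φ μ) →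
      ((∀ x, 0 ≤ ξ₂ x) ∧ Integrable ξ₂ volume ∧
        (∫⁻ x, gq nrm φ (ξ₂ x) ∂(muc μ)) ≤ 1 ∧ ENNReal.ofReal (∫ x, ξ₂ x) = pav nrm φ μ) →
      ξ₁ =ᵐ[(volume : Measure (Rd d))] ξ₂) :=
  statement16_general nrm hnrm φ hφ μ hconv

end
end
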